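/- arXiv:1509.08572 — 8 statements merged into one kernel-verified Lean document; each statement's English description precedes it below -/
import Mathlib

section
/- Let W be irreducible and α ∈ (0,1). For every initial vector x(0) ∈ ℝ^n, the averaging dynamics x(t) = P_α^t x(0) satisfies ‖x(t) − x̄·𝟙‖_∞ ≤ ‖x(0) − x̄·𝟙‖_∞ · exp(−⌊t/τ_α⌋) for all t ≥ 0, where x̄ = π'x(0) = ∑_i π_i x_i(0); in particular x(t) converges to the consensus vector x̄·𝟙 as t → ∞. -/
open Matrix Finset Filter

/-- Sup-norm contraction for a row-stochastic matrix. -/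
lemma aux_contract {n : ℕ} (M : Matrix (Fin n) (Fin n) ℝ)
    (hnn : ∀ i j, 0 ≤ M i j) (hrs : ∀ i, ∑ j, M i j = 1) (z : Fin n → ℝ) :
    ‖M.mulVec z‖ ≤ ‖z‖ := by
  rw [pi_norm_le_iff_of_nonneg (norm_nonneg z)]
  intro i
  rw [Real.norm_eq_abs, Matrix.mulVec, dotProduct]
  calc |∑ j, M i j * z j| ≤ ∑ j, |M i j * z j| := Finset.abs_sum_le_sum_abs _ _
    _ ≤ ∑ j, M i j * ‖z‖ := by
        apply Finset.sum_le_sum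
        intro j _
        rw [abs_mul, abs_of_nonneg (hnn i j)]
        exact mul_le_mul_of_nonneg_left (norm_le_pi_norm z j) (hnn i j)
    _ = ‖z‖ := by rw [← Finset.sum_mul, hrs i, one_mul]

/-- Contraction by factor `c` on vectors orthogonal to `π`. -/
lemma aux_key {n : ℕ} (M : Matrix (Fin n) (Fin n) ℝ) (π : Fin n → ℝ) (c : ℝ)
    (hc : 0 ≤ c) (hM : ∀ i, ∑ j, |M i j - π j| ≤ c) (z : Fin n → ℝ)
    (hz : ∑ j, π j * z j = 0) :
    ‖M.mulVec z‖ ≤ c * ‖z‖ := by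
  rw [pi_norm_le_iff_of_nonneg (by positivity)]
  intro i
  rw [Real.norm_eq_abs, Matrix.mulVec, dotProduct]
  have h1 : ∑ j, M i j * z j = ∑ j, (M i j - π j) * z j := by
    have : ∑ j, (M i j - π j) * z j = ∑ j, M i j * z j - ∑ j, π j * z j := by
      rw [← Finset.sum_sub_distrib]; congr 1; ext j; ring
    rw [this, hz, sub_zero]
  rw [h1]
  calc |∑ j, (M i j - π j) * z j| ≤ ∑ j, |(M i j - π j) * z j| :=
        Finset.abs_sum_le_sum_abs _ _
    _ ≤ ∑ j, |M i j - π j| * ‖z‖ := by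
        apply Finset.sum_le_sum
        intro j _
        rw [abs_mul]
        exact mul_le_mul_of_nonneg_left (norm_le_pi_norm z j) (abs_nonneg _)
    _ ≤ c * ‖z‖ := by
        rw [← Finset.sum_mul]
        exact mul_le_mul_of_nonneg_right (hM i) (norm_nonneg z)

/-- For irreducible `W` and `α ∈ (0,1)`, the averaging dynamics
`x(t) = P_α^t x(0)` satisfies
`‖x(t) − x̄𝟙‖_∞ ≤ ‖x(0) − x̄𝟙‖_∞ · exp(−⌊t/τ_α⌋)` where `x̄ = π'x(0)`,
and in particular `x(t) → x̄𝟙`. -/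
theorem stmt_0 {n : ℕ} (hn : 1 ≤ n)
    (W : Matrix (Fin n) (Fin n) ℝ)
    (hWnn : ∀ i j, 0 ≤ W i j)
    (hrow : ∀ i, 0 < ∑ j, W i j)
    (hirr : ∀ i j : Fin n, i ≠ j → Relation.TransGen (fun a b => 0 < W a b) i j)
    (P : Matrix (Fin n) (Fin n) ℝ)
    (hP : ∀ i j, P i j = W i j / ∑ k, W i k)
    (α : ℝ) (hα : α ∈ Set.Ioo (0 : ℝ) 1)
    (Pα : Matrix (Fin n) (Fin n) ℝ)
    (hPα : Pα = α • (1 : Matrix (Fin n) (Fin n) ℝ) + (1 - α) • P)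
    (π : Fin n → ℝ)
    (hπnn : ∀ i, 0 ≤ π i) (hπsum : ∑ i, π i = 1)
    (hπinv : Matrix.vecMul π P = π)
    (τ : ℕ)
    (hτ : IsLeast {t : ℕ | ∀ i, ∑ j, |(Pα ^ t) i j - π j| ≤ 1 / (2 * Real.exp 1)} τ)
    (x0 : Fin n → ℝ) (xbar : ℝ) (hxbar : xbar = ∑ i, π i * x0 i) :
    (∀ t : ℕ, ‖(Pα ^ t).mulVec x0 - (fun _ => xbar)‖ ≤
        ‖x0 - (fun _ => xbar)‖ * Real.exp (-((t / τ : ℕ) : ℝ))) ∧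
    Filter.Tendsto (fun t : ℕ => (Pα ^ t).mulVec x0) Filter.atTop
      (nhds (fun _ => xbar)) := by
  obtain ⟨hα0, hα1⟩ := hα
  -- P is row-stochastic
  have hPnn : ∀ i j, 0 ≤ P i j := fun i j => by
    rw [hP]; exact div_nonneg (hWnn i j) (hrow i).le
  have hPrs : ∀ i, ∑ j, P i j = 1 := by
    intro i
    simp only [hP]
    rw [← Finset.sum_div, div_self (hrow i).ne']
  have hone : ∀ i : Fin n, ∑ j, (1 : Matrix (Fin n) (Fin n) ℝ) i j = 1 := by
    intro i
    simp [Matrix.one_apply]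
  -- Pα is row-stochastic
  have hPαnn : ∀ i j, 0 ≤ Pα i j := by
    intro i j
    rw [hPα]
    simp only [Matrix.add_apply, Matrix.smul_apply, Matrix.one_apply, smul_eq_mul]
    have h2 := hPnn i j
    have h3 : (0:ℝ) ≤ 1 - α := by linarith
    split
    · nlinarith
    · nlinarith
  have hPαrs : ∀ i, ∑ j, Pα i j = 1 := by
    intro i
    rw [hPα]
    simp only [Matrix.add_apply, Matrix.smul_apply, smul_eq_mul]
    rw [Finset.sum_add_distrib, ← Finset.mul_sum, ← Finset.mul_sum, hPrs, hone]
    ring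
  -- powers of Pα are row-stochastic
  have hpow : ∀ t : ℕ, (∀ i j, 0 ≤ (Pα ^ t) i j) ∧ (∀ i, ∑ j, (Pα ^ t) i j = 1) := by
    intro t
    induction t with
    | zero =>
      constructor
      · intro i j
        rw [pow_zero, Matrix.one_apply]
        split <;> norm_num
      · intro i
        rw [pow_zero]
        exact hone i
    | succ t ih =>
      constructor
      · intro i j
        rw [pow_succ, Matrix.mul_apply]
        exact Finset.sum_nonneg fun k _ => mul_nonneg (ih.1 i k) (hPαnn k j)
      · intro i
        rw [pow_succ]
        simp only [Matrix.mul_apply]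
        rw [Finset.sum_comm]
        simp_rw [← Finset.mul_sum, hPαrs, mul_one]
        exact ih.2 i
  -- π is invariant for Pα
  have hπPα : Matrix.vecMul π Pα = π := by
    funext j
    have h1 : Matrix.vecMul π P j = π j := congrFun hπinv j
    simp only [Matrix.vecMul, dotProduct] at h1 ⊢
    simp only [hPα, Matrix.add_apply, Matrix.smul_apply, Matrix.one_apply, smul_eq_mul,
      mul_add, Finset.sum_add_distrib, mul_ite, mul_one, mul_zero]
    rw [Finset.sum_ite_eq' Finset.univ j (fun i => π i * α)]
    simp only [Finset.mem_univ, if_true]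
    have h2 : ∑ i, π i * ((1 - α) * P i j) = (1 - α) * ∑ i, π i * P i j := by
      rw [Finset.mul_sum]; congr 1; ext i; ring
    rw [h2, h1]
    ring
  have hπt : ∀ t : ℕ, Matrix.vecMul π (Pα ^ t) = π := by
    intro t
    induction t with
    | zero => rw [pow_zero, Matrix.vecMul_one]
    | succ t ih => rw [pow_succ, ← Matrix.vecMul_vecMul, ih, hπPα]
  -- the deviation vector
  set y : Fin n → ℝ := x0 - (fun _ => xbar) with hy
  have hy0 : ∑ j, π j * y j = 0 := by
    simp only [hy, Pi.sub_apply]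
    have : ∑ j, π j * (x0 j - xbar) = ∑ j, π j * x0 j - (∑ j, π j) * xbar := by
      rw [Finset.sum_mul, ← Finset.sum_sub_distrib]; congr 1; ext j; ring
    rw [this, hπsum, hxbar]; ring
  have hsub : ∀ t : ℕ, (Pα ^ t).mulVec x0 - (fun _ => xbar) = (Pα ^ t).mulVec y := by
    intro t
    rw [hy, Matrix.mulVec_sub]
    congr 1
    funext i
    simp only [Matrix.mulVec, dotProduct]
    rw [← Finset.sum_mul, (hpow t).2 i, one_mul]
  have horth : ∀ t : ℕ, ∑ j, π j * ((Pα ^ t).mulVec y) j = 0 := by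
    intro t
    have h1 : dotProduct π ((Pα ^ t).mulVec y) =
        dotProduct (Matrix.vecMul π (Pα ^ t)) y :=
      Matrix.dotProduct_mulVec π (Pα ^ t) y
    simpa only [dotProduct, hπt t, hy0] using h1
  have hcont : ∀ (t : ℕ) (z : Fin n → ℝ), ‖(Pα ^ t).mulVec z‖ ≤ ‖z‖ := by
    intro t z
    induction t with
    | zero => rw [pow_zero, Matrix.one_mulVec]
    | succ t ih =>
      calc ‖(Pα ^ (t + 1)).mulVec z‖ = ‖Pα.mulVec ((Pα ^ t).mulVec z)‖ := by
            rw [Matrix.mulVec_mulVec, ← pow_succ']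
        _ ≤ ‖(Pα ^ t).mulVec z‖ := aux_contract Pα hPαnn hPαrs _
        _ ≤ ‖z‖ := ih
  rcases Nat.eq_zero_or_pos τ with hτ0 | hτpos
  · -- degenerate case τ = 0 : then n = 1 and y = 0
    subst hτ0
    have hmem := hτ.1
    have hπhalf : ∀ i, 1/2 < π i := by
      intro i
      have h1 := hmem i
      rw [pow_zero] at h1
      have h2 : ∑ j, |(1 : Matrix (Fin n) (Fin n) ℝ) i j - π j| =
          |1 - π i| + ∑ j ∈ Finset.univ.erase i, |(1 : Matrix (Fin n) (Fin n) ℝ) i j - π j| := by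
        rw [← Finset.add_sum_erase _ _ (Finset.mem_univ i), Matrix.one_apply_eq]
      have h3 : ∑ j ∈ Finset.univ.erase i, |(1 : Matrix (Fin n) (Fin n) ℝ) i j - π j| =
          ∑ j ∈ Finset.univ.erase i, π j := by
        apply Finset.sum_congr rfl
        intro j hj
        rw [Matrix.one_apply_ne' (Finset.ne_of_mem_erase hj)]
        rw [abs_of_nonpos (by linarith [hπnn j])]
        ring
      have h4 : ∑ j ∈ Finset.univ.erase i, π j = 1 - π i := by
        rw [Finset.sum_erase_eq_sub (Finset.mem_univ i), hπsum]
      have h5 : 1 - π i ≤ |1 - π i| := le_abs_self _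
      have h6 : (1:ℝ)/(2 * Real.exp 1) < 1 := by
        rw [div_lt_one (by positivity)]
        nlinarith [Real.exp_one_gt_d9]
      rw [h2, h3, h4] at h1
      linarith
    have hn1 : n = 1 := by
      by_contra hne
      have hn2 : 2 ≤ n := by omega
      have i0 : Fin n := ⟨0, by omega⟩
      have i1 : Fin n := ⟨1, by omega⟩
      have hij : (⟨0, by omega⟩ : Fin n) ≠ ⟨1, by omega⟩ := by
        intro h
        exact absurd (congrArg Fin.val h) (by norm_num)
      have hle : π ⟨0, by omega⟩ + π ⟨1, by omega⟩ ≤ ∑ i, π i := by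
        rw [← Finset.sum_pair hij]
        exact Finset.sum_le_sum_of_subset_of_nonneg (Finset.subset_univ _)
          (fun i _ _ => hπnn i)
      rw [hπsum] at hle
      have := hπhalf ⟨0, by omega⟩
      have := hπhalf ⟨1, by omega⟩
      linarith
    subst hn1
    have hπ0 : π 0 = 1 := by
      have := hπsum
      rwa [Fin.sum_univ_one] at this
    have hy00 : y = 0 := by
      funext i
      have hi : i = 0 := Subsingleton.elim i 0
      simp only [hy, Pi.sub_apply, hxbar, Fin.sum_univ_one, hπ0, one_mul, hi, Pi.zero_apply]
      ring
    have hconsts : ∀ t : ℕ, (Pα ^ t).mulVec x0 = fun _ => xbar := by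
      intro t
      have := hsub t
      rw [hy00, Matrix.mulVec_zero, sub_eq_zero] at this
      exact this
    constructor
    · intro t
      rw [hconsts t, sub_self, norm_zero]
      positivity
    · have : (fun t : ℕ => (Pα ^ t).mulVec x0) = fun _ => (fun _ => xbar) :=
        funext hconsts
      rw [this]
      exact tendsto_const_nhds
  · -- main case τ ≥ 1
    have hexp : (1:ℝ)/(2 * Real.exp 1) ≤ Real.exp (-1) := by
      rw [Real.exp_neg, one_div]
      exact inv_anti₀ (Real.exp_pos 1) (by nlinarith [Real.exp_pos 1])
    have key : ∀ t : ℕ, ‖(Pα ^ t).mulVec y‖ ≤ ‖y‖ * Real.exp (-((t / τ : ℕ) : ℝ)) := by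
      intro t
      induction t using Nat.strong_induction_on with
      | _ t ih =>
        by_cases ht : t < τ
        · rw [Nat.div_eq_of_lt ht]
          simpa using hcont t y
        · push_neg at ht
          have h2 : (Pα ^ t).mulVec y = (Pα ^ τ).mulVec ((Pα ^ (t - τ)).mulVec y) := by
            have h1 : τ + (t - τ) = t := by omega
            rw [Matrix.mulVec_mulVec, ← pow_add, h1]
          have h3 := aux_key (Pα ^ τ) π (1/(2*Real.exp 1)) (by positivity) hτ.1
            ((Pα ^ (t - τ)).mulVec y) (horth (t - τ))
          have h4 := ih (t - τ) (by omega)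
          have h5 : t / τ = (t - τ) / τ + 1 := Nat.div_eq_sub_div hτpos ht
          calc ‖(Pα ^ t).mulVec y‖
              ≤ 1/(2*Real.exp 1) * ‖(Pα ^ (t - τ)).mulVec y‖ := by rw [h2]; exact h3
            _ ≤ Real.exp (-1) * (‖y‖ * Real.exp (-(((t - τ) / τ : ℕ) : ℝ))) := by
                apply mul_le_mul hexp h4 (norm_nonneg _) (Real.exp_pos _).le
            _ = ‖y‖ * Real.exp (-((t / τ : ℕ) : ℝ)) := by
                rw [h5]
                push_cast
                rw [neg_add, Real.exp_add]
                ring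
    constructor
    · intro t
      rw [hsub t]
      exact key t
    · rw [tendsto_iff_norm_sub_tendsto_zero]
      apply squeeze_zero (fun t => norm_nonneg _)
        (fun t => (hsub t) ▸ key t)
      have hdiv : Tendsto (fun t : ℕ => t / τ) atTop atTop := by
        apply Filter.tendsto_atTop_atTop.mpr
        intro b
        exact ⟨b * τ, fun t ht => (Nat.le_div_iff_mul_le hτpos).mpr ht⟩
      have hexp2 : Tendsto (fun t : ℕ => Real.exp (-((t / τ : ℕ) : ℝ))) atTop (nhds 0) :=
        Real.tendsto_exp_atBot.comp
          (tendsto_neg_atTop_atBot.comp (tendsto_natCast_atTop_atTop.comp hdiv))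
      simpa using hexp2.const_mul ‖y‖
end

section
/- Let Q ∈ ℝ^{m×m} be a nonnegative matrix whose row sums satisfy ∑_l Q_{il} ≤ 1 for every i, and suppose that for every index i there exists an index j with ∑_l Q_{jl} < 1 such that either j = i or there is a path from i to j through positive entries of Q. Then the spectral radius of Q is strictly less than 1; in particular I − Q is invertible and (I − Q)^{-1} = ∑_{l≥0} Q^l is nonnegative. -/
/-!
The row sums `Qᵏ *ᵥ 1` of the powers of a nonnegative substochastic matrix are nonincreasing
in `k` and bounded by `1`. If `0 < Q a b` and row `b` of `Qᵏ` sums to less than `1`, then so does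
row `a` of `Qᵏ⁺¹`; following a path to a deficient row, every row of some power `Q ^ N` becomes
deficient, i.e. `‖Q ^ N‖ < 1` in the `ℓ∞`-operator norm. Hence the Neumann series `∑ Qˡ`
converges; it inverts `1 - Q` and is entrywise nonnegative, and `Qˡ → 0` forces every
eigenvalue into the open unit disc.
-/

open Matrix Filter Topology

theorem summable_pow_of_norm_pow_lt_one {R : Type*} [NormedRing R] [CompleteSpace R] {x : R}
    {N : ℕ} (hN : N ≠ 0) (h : ‖x ^ N‖ < 1) : Summable (x ^ ·) := by
  have : NeZero N := ⟨hN⟩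
  have hfin : Summable fun r : Fin N => ‖x ^ (r : ℕ)‖ := Summable.of_finite
  have hbound : Summable fun p : ℕ × Fin N => ‖x ^ N‖ ^ p.1 * ‖x ^ (p.2 : ℕ)‖ :=
    (summable_geometric_of_lt_one (norm_nonneg _) h).mul_of_nonneg hfin
      (fun _ => pow_nonneg (norm_nonneg _) _) fun _ => norm_nonneg _
  refine (Nat.divModEquiv N).symm.summable_iff.mp (hbound.of_norm_bounded ?_)
  rintro ⟨_ | k, r⟩
  · simp
  · calc ‖x ^ ((k + 1) * N + r)‖ ≤ ‖(x ^ N) ^ (k + 1)‖ * ‖x ^ (r : ℕ)‖ := by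
          rw [pow_add, mul_comm (k + 1), pow_mul]
          exact norm_mul_le _ _
      _ ≤ ‖x ^ N‖ ^ (k + 1) * ‖x ^ (r : ℕ)‖ := by
          gcongr
          exact norm_pow_le' _ k.succ_pos

namespace Matrix

variable {n : Type*} [Fintype n]

theorem mulVec_one_apply {m α : Type*} [NonAssocSemiring α] (A : Matrix m n α) (i : m) :
    (A *ᵥ 1) i = ∑ j, A i j := by
  simp [mulVec, dotProduct]

section OrderedSemiring

variable {R : Type*} [Semiring R] [PartialOrder R] {A : Matrix n n R}

theorem mulVec_le_mulVec_of_nonneg [IsOrderedRing R] (hA : ∀ i j, 0 ≤ A i j) {v w : n → R}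
    (h : v ≤ w) : A *ᵥ v ≤ A *ᵥ w :=
  fun i => Finset.sum_le_sum fun j _ => mul_le_mul_of_nonneg_left (h j) (hA i j)

theorem mulVec_apply_lt_mulVec_apply_of_nonneg [IsStrictOrderedRing R] (hA : ∀ i j, 0 ≤ A i j)
    {v w : n → R} (h : v ≤ w) {i j : n} (hij : 0 < A i j) (hj : v j < w j) :
    (A *ᵥ v) i < (A *ᵥ w) i :=
  Finset.sum_lt_sum (fun k _ => mul_le_mul_of_nonneg_left (h k) (hA i k))
    ⟨j, Finset.mem_univ j, mul_lt_mul_of_pos_left hj hij⟩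

variable [DecidableEq n]

theorem antitone_pow_mulVec_one [IsOrderedRing R] (hA : ∀ i j, 0 ≤ A i j)
    (hsub : A *ᵥ 1 ≤ 1) : Antitone fun k : ℕ => A ^ k *ᵥ 1 :=
  antitone_nat_of_succ_le fun k => by
    rw [pow_succ, ← mulVec_mulVec]
    exact mulVec_le_mulVec_of_nonneg (pow_apply_nonneg hA k) hsub

theorem pow_mulVec_one_le_one [IsOrderedRing R] (hA : ∀ i j, 0 ≤ A i j) (hsub : A *ᵥ 1 ≤ 1)
    (k : ℕ) : A ^ k *ᵥ 1 ≤ 1 := by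
  simpa using antitone_pow_mulVec_one hA hsub k.zero_le

theorem pow_succ_mulVec_one_apply_lt_one [IsStrictOrderedRing R] (hA : ∀ i j, 0 ≤ A i j)
    (hsub : A *ᵥ 1 ≤ 1) {i j : n} {k : ℕ} (hij : 0 < A i j) (hj : (A ^ k *ᵥ 1) j < 1) :
    (A ^ (k + 1) *ᵥ 1) i < 1 := by
  rw [pow_succ', ← mulVec_mulVec]
  exact (mulVec_apply_lt_mulVec_apply_of_nonneg hA (pow_mulVec_one_le_one hA hsub k) hij
    hj).trans_le (hsub i)

theorem exists_pow_mulVec_one_apply_lt_one [IsStrictOrderedRing R] (hA : ∀ i j, 0 ≤ A i j)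
    (hsub : A *ᵥ 1 ≤ 1) {i j : n} (hj : (A *ᵥ 1) j < 1)
    (hij : j = i ∨ Relation.TransGen (fun a b => 0 < A a b) i j) :
    ∃ k, (A ^ k *ᵥ 1) i < 1 := by
  obtain rfl | hij := hij
  · exact ⟨1, by simpa using hj⟩
  induction hij using Relation.TransGen.head_induction_on with
  | single h => exact ⟨2, pow_succ_mulVec_one_apply_lt_one hA hsub h (by simpa using hj)⟩
  | head h _ ih =>
    obtain ⟨k, hk⟩ := ih
    exact ⟨k + 1, pow_succ_mulVec_one_apply_lt_one hA hsub h hk⟩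

theorem exists_pow_mulVec_one_lt_one [IsStrictOrderedRing R] (hA : ∀ i j, 0 ≤ A i j)
    (hsub : A *ᵥ 1 ≤ 1)
    (hreach : ∀ i, ∃ j, (A *ᵥ 1) j < 1 ∧
      (j = i ∨ Relation.TransGen (fun a b => 0 < A a b) i j)) :
    ∃ N ≠ 0, ∀ i, (A ^ N *ᵥ 1) i < 1 := by
  choose k hk using fun i =>
    have ⟨_, hj, hij⟩ := hreach i
    exists_pow_mulVec_one_apply_lt_one hA hsub hj hij
  refine ⟨Finset.univ.sup k + 1, Nat.succ_ne_zero _, fun i => ?_⟩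
  have hle : k i ≤ Finset.univ.sup k + 1 :=
    (Finset.le_sup (Finset.mem_univ i)).trans (Nat.le_succ _)
  exact (antitone_pow_mulVec_one hA hsub hle i).trans_lt (hk i)

end OrderedSemiring

section LinftyOpNorm

attribute [local instance] Matrix.linftyOpNormedAddCommGroup

theorem linfty_opNorm_lt_one_of_nonneg {m : Type*} [Fintype m] {B : Matrix m n ℝ}
    (hB : ∀ i j, 0 ≤ B i j) (h : ∀ i, (B *ᵥ 1) i < 1) : ‖B‖ < 1 := by
  rw [linfty_opNorm_def, NNReal.coe_lt_one, Finset.sup_lt_iff zero_lt_one]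
  intro i _
  rw [← NNReal.coe_lt_one, NNReal.coe_sum]
  simpa [mulVec_one_apply, abs_of_nonneg (hB i _)] using h i

-- The normed-space structure makes the finite-dimensional matrix ring complete.
attribute [local instance] Matrix.linftyOpNormedRing Matrix.linftyOpNormedSpace

theorem summable_pow_of_pow_mulVec_one_lt_one [DecidableEq n] {A : Matrix n n ℝ}
    (hA : ∀ i j, 0 ≤ A i j) {N : ℕ} (hN : N ≠ 0) (h : ∀ i, (A ^ N *ᵥ 1) i < 1) :
    Summable (A ^ ·) :=
  summable_pow_of_norm_pow_lt_one hN (linfty_opNorm_lt_one_of_nonneg (pow_apply_nonneg hA N) h)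

end LinftyOpNorm

variable [DecidableEq n]

theorem norm_lt_one_of_mulVec_eq_smul {𝕜 : Type*} [NormedField 𝕜] {A : Matrix n n 𝕜}
    (hA : Tendsto (A ^ ·) atTop (𝓝 0)) {z : 𝕜} {v : n → 𝕜} (hv : v ≠ 0)
    (hAv : A *ᵥ v = z • v) : ‖z‖ < 1 := by
  obtain ⟨i, hi⟩ : ∃ i, v i ≠ 0 := Function.ne_iff.mp hv
  have hpow : ∀ k : ℕ, A ^ k *ᵥ v = z ^ k • v := by
    intro k
    induction k with
    | zero => simp
    | succ k ih => rw [pow_succ', ← mulVec_mulVec, ih, mulVec_smul, hAv, smul_smul, pow_succ]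
  have hlim : Tendsto (fun k : ℕ => z ^ k * v i) atTop (𝓝 0) := by
    have hcont : Continuous fun B : Matrix n n 𝕜 => (B *ᵥ v) i :=
      (continuous_apply i).comp (continuous_id.matrix_mulVec continuous_const)
    have := (hcont.tendsto 0).comp hA
    simpa [Function.comp_def, hpow] using this
  rw [← tendsto_pow_atTop_nhds_zero_iff_norm_lt_one]
  simpa [hi] using hlim.mul_const (v i)⁻¹

end Matrix

/-- A substochastic nonnegative matrix from every row of which a
deficient row (row sum < 1) is reachable has spectral radius < 1; hence `I − Q`
is invertible with nonnegative inverse `∑_{l≥0} Q^l`. -/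
theorem stmt_3 {m : ℕ}
    (Q : Matrix (Fin m) (Fin m) ℝ)
    (hQnn : ∀ i j, 0 ≤ Q i j)
    (hsub : ∀ i, ∑ l, Q i l ≤ 1)
    (hreach : ∀ i : Fin m, ∃ j : Fin m, (∑ l, Q j l < 1) ∧
      (j = i ∨ Relation.TransGen (fun a b => 0 < Q a b) i j)) :
    (∀ z : ℂ, (∃ v : Fin m → ℂ, v ≠ 0 ∧ (Q.map (Complex.ofReal)).mulVec v = z • v) →
      ‖z‖ < 1) ∧
    IsUnit (1 - Q) ∧
    (1 - Q)⁻¹ = (∑' l : ℕ, Q ^ l) ∧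
    (∀ i j, 0 ≤ (1 - Q)⁻¹ i j) := by
  simp_rw [← mulVec_one_apply] at hsub hreach
  obtain ⟨N, hN, hlt⟩ := exists_pow_mulVec_one_lt_one hQnn hsub hreach
  have hS : Summable (Q ^ ·) := summable_pow_of_pow_mulVec_one_lt_one hQnn hN hlt
  have hinv : (1 - Q)⁻¹ = ∑' l : ℕ, Q ^ l := inv_eq_right_inv hS.one_sub_mul_tsum_pow
  have hpowC : Tendsto (Q.map Complex.ofReal ^ ·) atTop (𝓝 0) := by
    have := ((continuous_id.matrix_map Complex.continuous_ofReal).tendsto 0).comp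
      hS.tendsto_atTop_zero
    have hmap (k : ℕ) : (Q ^ k).map Complex.ofReal = Q.map Complex.ofReal ^ k :=
      Q.map_pow Complex.ofRealHom k
    simpa [Function.comp_def, hmap] using this
  refine ⟨fun z ⟨v, hv, hQv⟩ => norm_lt_one_of_mulVec_eq_smul hpowC hv hQv,
    ⟨⟨1 - Q, _, hS.one_sub_mul_tsum_pow, hS.tsum_pow_mul_one_sub⟩, rfl⟩, hinv, fun i j => ?_⟩
  rw [hinv]
  exact HasSum.nonneg (fun l => pow_apply_nonneg hQnn l i j)
    (Pi.hasSum.mp (Pi.hasSum.mp hS.hasSum i) j)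
end

section
/- Under the sink structure hypotheses, there exists a unique matrix H ∈ ℝ^{n×s} with nonnegative entries such that H𝟙 = 𝟙 (each row sums to 1), LH = 0, and for every k: H_{ik} = 1 for all i ∈ S_k and H_{ik} = 0 for all i ∈ S_{−k}. -/
/-!
Each column `H k` is the harmonic extension, off the sinks, of the indicator of `S k`. Since every
node outside the sinks reaches a sink along positive weights, a function harmonic off the sinks
attains its minimum on them (discrete minimum principle). This gives uniqueness of harmonic
extensions, hence their existence by finite-dimensional linear algebra, and also nonnegativity.
The columns are harmonic on the sinks as well because they are constant on each closed class
`S l`, and the row sums equal `1` because both `H *ᵥ 1` and `1` are harmonic extensions of `1`.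
-/

open Matrix Finset

namespace Matrix

variable {ι κ : Type*} [Fintype ι] [DecidableEq ι]

def laplacian (W : Matrix ι ι ℝ) : Matrix ι ι ℝ :=
  diagonal (fun i => ∑ j, W i j) - W

variable {W : Matrix ι ι ℝ}

theorem laplacian_mulVec_apply (v : ι → ℝ) (i : ι) :
    (W.laplacian *ᵥ v) i = ∑ j, W i j * (v i - v j) := by
  simp only [laplacian, sub_mulVec, Pi.sub_apply, mulVec_diagonal, mul_sub, sum_sub_distrib,
    sum_mul]
  rfl

theorem laplacian_mulVec_one : W.laplacian *ᵥ 1 = 0 := by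
  ext i
  simp [laplacian_mulVec_apply]

theorem laplacian_mulVec_apply_eq_zero_of_forall_eq {A : Set ι} {v : ι → ℝ} {i : ι}
    (hW : ∀ j ∉ A, W i j = 0) (hv : ∀ j ∈ A, v j = v i) : (W.laplacian *ᵥ v) i = 0 := by
  rw [laplacian_mulVec_apply]
  refine sum_eq_zero fun j _ => ?_
  by_cases hj : j ∈ A
  · simp [hv j hj]
  · simp [hW j hj]

theorem laplacian_mul_apply (H : Matrix ι κ ℝ) (i : ι) (k : κ) :
    (W.laplacian * H) i k = (W.laplacian *ᵥ fun j => H j k) i :=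
  rfl

theorem apply_eq_of_isMin_of_laplacian_mulVec_eq_zero (hW : ∀ i j, 0 ≤ W i j) {v : ι → ℝ}
    {b c : ι} (hmin : ∀ j, v b ≤ v j) (hb : (W.laplacian *ᵥ v) b = 0) (hbc : 0 < W b c) :
    v c = v b := by
  have hsum : ∑ j, W b j * (v j - v b) = 0 := by
    rw [laplacian_mulVec_apply] at hb
    rw [← neg_eq_zero, ← hb, ← sum_neg_distrib]
    exact sum_congr rfl fun j _ => by ring
  have hterm := (sum_eq_zero_iff_of_nonneg fun j _ =>
    mul_nonneg (hW b j) (sub_nonneg.mpr (hmin j))).mp hsum c (mem_univ c)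
  rcases mul_eq_zero.mp hterm with h | h
  · exact absurd h hbc.ne'
  · linarith

variable {T : Set ι}

theorem nonneg_of_laplacian_mulVec_eq_zero (hW : ∀ i j, 0 ≤ W i j)
    (hreach : ∀ i ∉ T, ∃ j ∈ T, Relation.TransGen (fun a b => 0 < W a b) i j) {v : ι → ℝ}
    (hv : ∀ i ∉ T, (W.laplacian *ᵥ v) i = 0) (hT : ∀ i ∈ T, 0 ≤ v i) (i : ι) : 0 ≤ v i := by
  by_contra! hi
  have hne : (univ : Finset ι).Nonempty := ⟨i, mem_univ i⟩
  obtain ⟨a, -, ha⟩ := exists_min_image univ v hne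
  have hmin : ∀ j, v a ≤ v j := fun j => ha j (mem_univ j)
  have haneg : v a < 0 := (hmin i).trans_lt hi
  have hnotT : ∀ b, v b = v a → b ∉ T := fun b hb hbT => by linarith [hT b hbT]
  have hstep : ∀ b c, v b = v a → 0 < W b c → v c = v a := fun b c hb hbc => by
    rw [← hb] at hmin ⊢
    exact apply_eq_of_isMin_of_laplacian_mulVec_eq_zero hW hmin (hv b (hnotT b hb)) hbc
  obtain ⟨j, hjT, hpath⟩ := hreach a (hnotT a rfl)
  refine hnotT j ?_ hjT
  clear hjT
  induction hpath with
  | single h => exact hstep a _ rfl h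
  | tail _ h ih => exact hstep _ _ ih h

theorem le_of_laplacian_mulVec_eq_zero (hW : ∀ i j, 0 ≤ W i j)
    (hreach : ∀ i ∉ T, ∃ j ∈ T, Relation.TransGen (fun a b => 0 < W a b) i j) {v w : ι → ℝ}
    (hv : ∀ i ∉ T, (W.laplacian *ᵥ v) i = 0) (hw : ∀ i ∉ T, (W.laplacian *ᵥ w) i = 0)
    (hvw : ∀ i ∈ T, v i ≤ w i) : v ≤ w := fun i =>
  sub_nonneg.mp <| nonneg_of_laplacian_mulVec_eq_zero hW hreach (v := w - v)
    (fun _ hi => by simp [mulVec_sub, hv _ hi, hw _ hi]) (fun _ hi => by simp [hvw _ hi]) i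

theorem eq_of_laplacian_mulVec_eq_zero (hW : ∀ i j, 0 ≤ W i j)
    (hreach : ∀ i ∉ T, ∃ j ∈ T, Relation.TransGen (fun a b => 0 < W a b) i j) {v w : ι → ℝ}
    (hv : ∀ i ∉ T, (W.laplacian *ᵥ v) i = 0) (hw : ∀ i ∉ T, (W.laplacian *ᵥ w) i = 0)
    (hvw : Set.EqOn v w T) : v = w :=
  le_antisymm (le_of_laplacian_mulVec_eq_zero hW hreach hv hw fun _ hi => (hvw hi).le)
    (le_of_laplacian_mulVec_eq_zero hW hreach hw hv fun _ hi => (hvw hi).ge)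

theorem exists_laplacian_mulVec_eq_zero_eqOn (hW : ∀ i j, 0 ≤ W i j)
    (hreach : ∀ i ∉ T, ∃ j ∈ T, Relation.TransGen (fun a b => 0 < W a b) i j) (g : ι → ℝ) :
    ∃ v : ι → ℝ, (∀ i ∉ T, (W.laplacian *ᵥ v) i = 0) ∧ Set.EqOn v g T := by
  classical
  let Φ : (ι → ℝ) →ₗ[ℝ] ι → ℝ := LinearMap.pi fun i =>
    if i ∈ T then LinearMap.proj i else (LinearMap.proj i).comp W.laplacian.mulVecLin
  have hΦ : ∀ v i, Φ v i = if i ∈ T then v i else (W.laplacian *ᵥ v) i := by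
    intro v i
    simp only [Φ, LinearMap.pi_apply]
    split_ifs <;> rfl
  have hinj : Function.Injective Φ := by
    refine (injective_iff_map_eq_zero Φ).mpr fun v hv => ?_
    have hvi : ∀ i, Φ v i = 0 := fun i => congrFun hv i
    refine eq_of_laplacian_mulVec_eq_zero hW hreach (fun i hi => ?_) (fun i _ => by simp)
      (fun i hi => ?_)
    · simpa [hΦ, hi] using hvi i
    · simpa [hΦ, hi] using hvi i
  obtain ⟨v, hv⟩ := LinearMap.injective_iff_surjective.mp hinj (T.piecewise g 0)
  refine ⟨v, fun i hi => ?_, fun i hi => ?_⟩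
  · simpa [hΦ, hi] using congrFun hv i
  · simpa [hΦ, hi] using congrFun hv i

theorem laplacian_mulVec_col_eq_zero {H : Matrix ι κ ℝ} (hH : W.laplacian * H = 0) (k : κ) :
    W.laplacian *ᵥ (fun i => H i k) = 0 := by
  ext i
  rw [← laplacian_mul_apply, hH, Matrix.zero_apply, Pi.zero_apply]

theorem nonneg_of_laplacian_mul_eq_zero (hW : ∀ i j, 0 ≤ W i j)
    (hreach : ∀ i ∉ T, ∃ j ∈ T, Relation.TransGen (fun a b => 0 < W a b) i j)
    {H : Matrix ι κ ℝ} (hH : W.laplacian * H = 0) (hT : ∀ i ∈ T, ∀ k, 0 ≤ H i k) (i : ι) (k : κ) :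
    0 ≤ H i k :=
  nonneg_of_laplacian_mulVec_eq_zero hW hreach (fun i _ => by
    rw [laplacian_mulVec_col_eq_zero hH, Pi.zero_apply]) (fun i hi => hT i hi k) i

theorem eq_of_laplacian_mul_eq_zero (hW : ∀ i j, 0 ≤ W i j)
    (hreach : ∀ i ∉ T, ∃ j ∈ T, Relation.TransGen (fun a b => 0 < W a b) i j)
    {H H' : Matrix ι κ ℝ} (hH : W.laplacian * H = 0) (hH' : W.laplacian * H' = 0)
    (hT : ∀ i ∈ T, H i = H' i) : H = H' := by
  ext i k
  refine congrFun (eq_of_laplacian_mulVec_eq_zero hW hreach (v := fun i => H i k)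
    (w := fun i => H' i k) (fun _ _ => ?_) (fun _ _ => ?_) fun i hi => congrFun (hT i hi) k) i
  · rw [laplacian_mulVec_col_eq_zero hH, Pi.zero_apply]
  · rw [laplacian_mulVec_col_eq_zero hH', Pi.zero_apply]

theorem sum_eq_one_of_laplacian_mul_eq_zero [Fintype κ] (hW : ∀ i j, 0 ≤ W i j)
    (hreach : ∀ i ∉ T, ∃ j ∈ T, Relation.TransGen (fun a b => 0 < W a b) i j)
    {H : Matrix ι κ ℝ} (hH : W.laplacian * H = 0) (hT : ∀ i ∈ T, ∑ k, H i k = 1) (i : ι) :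
    ∑ k, H i k = 1 := by
  have hrow : H *ᵥ 1 = 1 := by
    refine eq_of_laplacian_mulVec_eq_zero hW hreach (fun i _ => ?_)
      (fun i _ => by rw [laplacian_mulVec_one, Pi.zero_apply]) fun i hi => ?_
    · rw [mulVec_mulVec, hH, zero_mulVec, Pi.zero_apply]
    · simpa [mulVec, dotProduct] using hT i hi
  simpa [mulVec, dotProduct] using congrFun hrow i

end Matrix

section Sinks

variable {ι κ : Type*} {W : Matrix ι ι ℝ} {S : κ → Finset ι}

theorem mem_iff_eq_of_disjoint (hS : ∀ k l, k ≠ l → Disjoint (S k) (S l)) {i : ι} {k l : κ}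
    (hi : i ∈ S l) : i ∈ S k ↔ l = k := by
  refine ⟨fun hik => ?_, fun h => h ▸ hi⟩
  by_contra hlk
  exact disjoint_left.mp (hS l k hlk) hi hik

theorem apply_eq_ite_of_mem [DecidableEq κ] {H : Matrix ι κ ℝ} (hone : ∀ k, ∀ i ∈ S k, H i k = 1)
    (hzero : ∀ k l, l ≠ k → ∀ i ∈ S l, H i k = 0) {i : ι} {l : κ} (hi : i ∈ S l) (k : κ) :
    H i k = if l = k then 1 else 0 := by
  split_ifs with hlk
  · exact hlk ▸ hone l i hi
  · exact hzero k l hlk i hi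

theorem exists_laplacian_mul_eq_zero_of_sinks [Fintype ι] [DecidableEq ι] [Fintype κ]
    [DecidableEq κ] (hW : ∀ i j, 0 ≤ W i j) (hS : ∀ k l, k ≠ l → Disjoint (S k) (S l))
    (hsink : ∀ k, ∀ i ∈ S k, ∀ j, j ∉ S k → W i j = 0)
    (hreach : ∀ i ∉ ⋃ k, (S k : Set ι),
      ∃ j ∈ ⋃ k, (S k : Set ι), Relation.TransGen (fun a b => 0 < W a b) i j) :
    ∃ H : Matrix ι κ ℝ, W.laplacian * H = 0 ∧
      ∀ l, ∀ i ∈ S l, ∀ k, H i k = if l = k then 1 else 0 := by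
  choose v hv hvS using fun k =>
    exists_laplacian_mulVec_eq_zero_eqOn hW hreach fun i => if i ∈ S k then (1 : ℝ) else 0
  have hvS' : ∀ l, ∀ i ∈ S l, ∀ k, v k i = if l = k then 1 else 0 := by
    intro l i hi k
    rw [hvS k (Set.mem_iUnion_of_mem l hi)]
    exact if_congr (mem_iff_eq_of_disjoint hS hi) rfl rfl
  refine ⟨of fun i k => v k i, ?_, hvS'⟩
  ext i k
  rw [laplacian_mul_apply, Matrix.zero_apply]
  by_cases hi : ∃ l, i ∈ S l
  · obtain ⟨l, hl⟩ := hi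
    exact laplacian_mulVec_apply_eq_zero_of_forall_eq (A := S l) (hsink l i hl)
      fun j hj => by simp [hvS' l j hj, hvS' l i hl]
  · exact hv k i (by simpa using hi)

end Sinks

theorem stmt_5_general {n s : ℕ}
    (W : Matrix (Fin n) (Fin n) ℝ)
    (hWnn : ∀ i j, 0 ≤ W i j)
    (S : Fin s → Finset (Fin n))
    (hSdisj : ∀ k l, k ≠ l → Disjoint (S k) (S l))
    (hsink : ∀ k, ∀ i ∈ S k, ∀ j, j ∉ S k → W i j = 0)
    (hreach : ∀ i : Fin n, (∀ k, i ∉ S k) →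
      ∃ j : Fin n, (∃ k, j ∈ S k) ∧ Relation.TransGen (fun a b => 0 < W a b) i j)
    (L : Matrix (Fin n) (Fin n) ℝ)
    (hL : L = Matrix.diagonal (fun i => ∑ j, W i j) - W) :
    ∃! H : Matrix (Fin n) (Fin s) ℝ,
      (∀ i k, 0 ≤ H i k) ∧
      (∀ i, ∑ k, H i k = 1) ∧
      L * H = 0 ∧
      (∀ k, ∀ i ∈ S k, H i k = 1) ∧
      (∀ k l, l ≠ k → ∀ i ∈ S l, H i k = 0) := by
  obtain rfl : L = W.laplacian := hL
  set T : Set (Fin n) := ⋃ k, (S k : Set (Fin n))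
  have hmemT : ∀ i ∈ T, ∃ l, i ∈ S l := fun i hi => by simpa [T] using hi
  have hreachT : ∀ i ∉ T, ∃ j ∈ T, Relation.TransGen (fun a b => 0 < W a b) i j := by
    intro i hi
    simpa [T] using hreach i (by simpa [T] using hi)
  obtain ⟨H, hLH, hHS⟩ := exists_laplacian_mul_eq_zero_of_sinks hWnn hSdisj hsink hreachT
  refine ⟨H, ⟨nonneg_of_laplacian_mul_eq_zero hWnn hreachT hLH fun i hi k => ?_,
    sum_eq_one_of_laplacian_mul_eq_zero hWnn hreachT hLH fun i hi => ?_, hLH,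
    fun k i hi => by simp [hHS k i hi], fun k l hlk i hi => by simp [hHS l i hi, hlk]⟩, ?_⟩
  · obtain ⟨l, hl⟩ := hmemT i hi
    rw [hHS l i hl k]
    split_ifs <;> norm_num
  · obtain ⟨l, hl⟩ := hmemT i hi
    simp [hHS l i hl]
  · rintro H' ⟨-, -, hLH', hone, hzero⟩
    refine eq_of_laplacian_mul_eq_zero hWnn hreachT hLH' hLH fun i hi => ?_
    obtain ⟨l, hl⟩ := hmemT i hi
    ext k
    rw [apply_eq_ite_of_mem hone hzero hl, hHS l i hl]

/-- Under the sink structure hypotheses, there is a unique nonnegative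
matrix `H ∈ ℝ^{n×s}` with `H𝟙 = 𝟙`, `LH = 0`, `H_{ik} = 1` on `S_k` and `H_{ik} = 0`
on `S_{−k}`. -/
theorem stmt_5 {n s : ℕ} (hn : 1 ≤ n) (hs : 1 ≤ s)
    (W : Matrix (Fin n) (Fin n) ℝ)
    (hWnn : ∀ i j, 0 ≤ W i j)
    (hrow : ∀ i, 0 < ∑ j, W i j)
    (S : Fin s → Finset (Fin n))
    (hSne : ∀ k, (S k).Nonempty)
    (hSdisj : ∀ k l, k ≠ l → Disjoint (S k) (S l))
    (hsink : ∀ k, ∀ i ∈ S k, ∀ j, j ∉ S k → W i j = 0)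
    (hSirr : ∀ k, ∀ i ∈ S k, ∀ j ∈ S k, i ≠ j →
      Relation.TransGen (fun a b => a ∈ S k ∧ b ∈ S k ∧ 0 < W a b) i j)
    (hreach : ∀ i : Fin n, (∀ k, i ∉ S k) →
      ∃ j : Fin n, (∃ k, j ∈ S k) ∧ Relation.TransGen (fun a b => 0 < W a b) i j)
    (L : Matrix (Fin n) (Fin n) ℝ)
    (hL : L = Matrix.diagonal (fun i => ∑ j, W i j) - W) :
    ∃! H : Matrix (Fin n) (Fin s) ℝ,
      (∀ i k, 0 ≤ H i k) ∧
      (∀ i, ∑ k, H i k = 1) ∧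
      L * H = 0 ∧
      (∀ k, ∀ i ∈ S k, H i k = 1) ∧
      (∀ k l, l ≠ k → ∀ i ∈ S l, H i k = 0) :=
  stmt_5_general W hWnn S hSdisj hsink hreach L hL
end

section
/- Under the sink structure hypotheses, for every α ∈ (0,1) and every initial vector x(0) ∈ ℝ^n, the averaging dynamics x(t) = P_α^t x(0) converges as t → ∞ to H x̄, where H ∈ ℝ^{n×s} is the unique nonnegative matrix with H𝟙 = 𝟙, LH = 0 and boundary values H_{ik} = 1 on S_k, H_{ik} = 0 on S_{−k}, and where x̄ ∈ ℝ^s has entries x̄_k = ∑_{i∈S_k} π^{(k)}_i x_i(0), with π^{(k)} the unique invariant probability vector of the row-stochastic matrix obtained by restricting P to S_k × S_k. -/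
/-!
The error `x(0) - H x̄` is annihilated by every invariant measure `π⁽ᵏ⁾`, a property that `P_α`
preserves because each sink is closed and `π⁽ᵏ⁾` is invariant on it, while `H x̄` is fixed by
`P_α` because `L H = 0`. A vector annihilated by `π⁽ᵏ⁾` has a nonpositive and a nonnegative entry
in `S_k`. Every node reaches all of some sink, and the positive diagonal of `P_α` lets walks
wait, so for some `m` every node puts mass at least `δ > 0` on each node of some sink after `m`
steps. Hence `P_α ^ m` contracts the sup norm of the error by `1 - δ`, and the error tends to `0`.
-/

open Filter Topology Finset Relation

lemma Finite.exists_pos_forall_le_of_pos {α : Type*} [Finite α] (f : α → ℝ) :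
    ∃ δ > 0, ∀ a, 0 < f a → δ ≤ f a := by
  rcases isEmpty_or_nonempty α with hα | hα
  · exact ⟨1, one_pos, fun a => isEmptyElim a⟩
  obtain ⟨a₀, ha₀⟩ := Finite.exists_min fun a => if 0 < f a then f a else 1
  refine ⟨_, ?_, fun a ha => (ha₀ a).trans_eq (if_pos ha)⟩
  split_ifs with h
  exacts [h, one_pos]

lemma Finset.exists_nonpos_of_sum_mul_eq_zero {ι : Type*} {s : Finset ι} {p y : ι → ℝ}
    (hp : ∀ i ∈ s, 0 ≤ p i) (hpos : 0 < ∑ i ∈ s, p i) (h : ∑ i ∈ s, p i * y i = 0) :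
    ∃ i ∈ s, y i ≤ 0 := by
  by_contra! hy
  obtain ⟨i, hi, hpi⟩ := (sum_pos_iff_of_nonneg hp).1 hpos
  refine (sum_pos' (fun j hj => mul_nonneg (hp j hj) (hy j hj).le) ⟨i, hi, ?_⟩).ne' h
  exact mul_pos hpi (hy i hi)

lemma Relation.exists_forall_mem_reflTransGen {ι κ : Type*} {r : ι → ι → Prop} {S : κ → Finset ι}
    (hirr : ∀ k, ∀ i ∈ S k, ∀ j ∈ S k, i ≠ j →
      TransGen (fun a b => a ∈ S k ∧ b ∈ S k ∧ r a b) i j)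
    (hreach : ∀ i, (∀ k, i ∉ S k) → ∃ j, (∃ k, j ∈ S k) ∧ TransGen r i j) (i : ι) :
    ∃ k, ∀ j ∈ S k, ReflTransGen r i j := by
  have hwithin : ∀ k, ∀ i ∈ S k, ∀ j ∈ S k, ReflTransGen r i j := fun k i hi j hj => by
    rcases eq_or_ne i j with rfl | hij
    · exact .refl
    · exact ReflTransGen.mono (fun _ _ h => h.2.2) _ _ (hirr k i hi j hj hij).to_reflTransGen
  by_cases hi : ∃ k, i ∈ S k
  · obtain ⟨k, hik⟩ := hi
    exact ⟨k, hwithin k i hik⟩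
  · obtain ⟨j₀, ⟨k, hj₀⟩, hij₀⟩ := hreach i (not_exists.1 hi)
    exact ⟨k, fun j hj => hij₀.to_reflTransGen.trans (hwithin k j₀ hj₀ j hj)⟩

namespace Matrix

variable {ι : Type*}

lemma mulVec_apply_eq_of_apply_eq_one {κ : Type*} [Fintype κ] {H : Matrix ι κ ℝ} {i : ι} {k : κ}
    (hone : H i k = 1) (hzero : ∀ l ≠ k, H i l = 0) (x : κ → ℝ) : (H *ᵥ x) i = x k := by
  rw [mulVec, dotProduct, sum_eq_single k (fun l _ hl => by rw [hzero l hl, zero_mul]) (by simp),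
    hone, one_mul]

section Lazy

variable [DecidableEq ι] {P : Matrix ι ι ℝ} {α : ℝ}

lemma smul_one_add_smul_apply_self_pos (hP : ∀ i j, 0 ≤ P i j) (hα₀ : 0 < α) (hα₁ : α ≤ 1)
    (i : ι) : 0 < (α • 1 + (1 - α) • P) i i := by
  have := mul_nonneg (sub_nonneg.2 hα₁) (hP i i)
  simp only [add_apply, smul_apply, one_apply_eq, smul_eq_mul]
  linarith

lemma smul_one_add_smul_apply_pos (hα₀ : 0 ≤ α) (hα₁ : α < 1) {i j : ι} (hij : 0 < P i j) :
    0 < (α • 1 + (1 - α) • P) i j := by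
  have := mul_nonneg hα₀ (zero_le_one_elem (α := ℝ) i j)
  have := mul_pos (sub_pos.2 hα₁) hij
  simp only [add_apply, smul_apply, smul_eq_mul]
  linarith

variable [Fintype ι]

lemma smul_one_add_smul_mem_rowStochastic (hP : P ∈ rowStochastic ℝ ι) (hα₀ : 0 ≤ α)
    (hα₁ : α ≤ 1) : α • 1 + (1 - α) • P ∈ rowStochastic ℝ ι :=
  convex_rowStochastic (one_mem _) hP hα₀ (sub_nonneg.2 hα₁) (add_sub_cancel α 1)

lemma smul_one_add_smul_mul_eq_self {κ : Type*} {H : Matrix ι κ ℝ} (hPH : P * H = H) :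
    (α • 1 + (1 - α) • P) * H = H := by
  rw [Matrix.add_mul, Matrix.smul_mul, Matrix.smul_mul, Matrix.one_mul, hPH, ← add_smul,
    add_sub_cancel, one_smul]

lemma sum_mul_smul_one_add_smul_mulVec_eq {T : Finset ι} {p : ι → ℝ}
    (h : ∀ y, ∑ i ∈ T, p i * (P *ᵥ y) i = ∑ i ∈ T, p i * y i) (y : ι → ℝ) :
    ∑ i ∈ T, p i * ((α • 1 + (1 - α) • P) *ᵥ y) i = ∑ i ∈ T, p i * y i := by
  simp only [add_mulVec, smul_mulVec, one_mulVec, Pi.add_apply, Pi.smul_apply, smul_eq_mul,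
    mul_add, sum_add_distrib, mul_left_comm (p _), ← mul_sum, h]
  ring

end Lazy

variable [Fintype ι] {A : Matrix ι ι ℝ}

lemma mul_apply_pos_of_pos {B : Matrix ι ι ℝ} (hA : ∀ i j, 0 ≤ A i j) (hB : ∀ i j, 0 ≤ B i j)
    {i j l : ι} (hij : 0 < A i j) (hjl : 0 < B j l) : 0 < (A * B) i l := by
  rw [mul_apply]
  exact (mul_pos hij hjl).trans_le (single_le_sum (f := fun j => A i j * B j l)
    (fun j _ => mul_nonneg (hA i j) (hB j l)) (mem_univ j))

lemma sum_mul_mulVec_eq_of_invariant {T : Finset ι} {p : ι → ℝ}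
    (hclosed : ∀ i ∈ T, ∀ j ∉ T, A i j = 0) (hinv : ∀ j ∈ T, ∑ i ∈ T, p i * A i j = p j)
    (y : ι → ℝ) : ∑ i ∈ T, p i * (A *ᵥ y) i = ∑ i ∈ T, p i * y i := by
  have hsupp : ∀ i ∈ T, (A *ᵥ y) i = ∑ j ∈ T, A i j * y j := fun i hi =>
    (sum_subset (subset_univ T) fun j _ hj => by simp [hclosed i hi j hj]).symm
  calc ∑ i ∈ T, p i * (A *ᵥ y) i = ∑ j ∈ T, (∑ i ∈ T, p i * A i j) * y j := by
        simp only [sum_congr rfl fun i hi => congrArg (p i * ·) (hsupp i hi), mul_sum, sum_mul,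
          mul_assoc]
        exact sum_comm
    _ = ∑ j ∈ T, p j * y j := sum_congr rfl fun j hj => by rw [hinv j hj]

variable [DecidableEq ι]

lemma mulVec_apply_le_of_mem_rowStochastic (hA : A ∈ rowStochastic ℝ ι) {y : ι → ℝ} {c : ℝ}
    (hy : ∀ l, y l ≤ c) (i j : ι) : (A *ᵥ y) i ≤ c - A i j * (c - y j) := by
  have hgap : (A *ᵥ y) i = c - ∑ l, A i l * (c - y l) := by
    simp only [mulVec, dotProduct, mul_sub, Finset.sum_sub_distrib, ← Finset.sum_mul,
      sum_row_of_mem_rowStochastic hA, one_mul, sub_sub_cancel]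
  have hj : A i j * (c - y j) ≤ ∑ l, A i l * (c - y l) :=
    single_le_sum (f := fun l => A i l * (c - y l))
      (fun l _ => mul_nonneg (nonneg_of_mem_rowStochastic hA) (sub_nonneg.2 (hy l))) (mem_univ j)
  linarith

lemma norm_mulVec_le_norm_of_mem_rowStochastic (hA : A ∈ rowStochastic ℝ ι) (y : ι → ℝ) :
    ‖A *ᵥ y‖ ≤ ‖y‖ := by
  have hupper : ∀ z : ι → ℝ, ∀ i, (A *ᵥ z) i ≤ ‖z‖ := fun z i => by
    have := mulVec_apply_le_of_mem_rowStochastic hA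
      (fun l => (le_abs_self _).trans (norm_le_pi_norm z l)) i i
    nlinarith [mul_nonneg (nonneg_of_mem_rowStochastic hA (i := i) (j := i))
      (sub_nonneg.2 ((le_abs_self (z i)).trans (norm_le_pi_norm z i)))]
  refine (pi_norm_le_iff_of_nonneg (norm_nonneg y)).2 fun i => abs_le.2 ⟨?_, hupper y i⟩
  have := hupper (-y) i
  rw [mulVec_neg, norm_neg] at this
  simpa using neg_le.1 this

lemma norm_mulVec_le_of_mem_rowStochastic [Nonempty ι] (hA : A ∈ rowStochastic ℝ ι)
    {y : ι → ℝ} {δ : ℝ}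
    (hle : ∀ i, ∃ j, δ ≤ A i j ∧ y j ≤ 0) (hge : ∀ i, ∃ j, δ ≤ A i j ∧ 0 ≤ y j) :
    ‖A *ᵥ y‖ ≤ (1 - δ) * ‖y‖ := by
  have hupper : ∀ z : ι → ℝ, (∀ i, ∃ j, δ ≤ A i j ∧ z j ≤ 0) →
      ∀ i, (A *ᵥ z) i ≤ (1 - δ) * ‖z‖ := by
    intro z hz i
    obtain ⟨j, hδj, hzj⟩ := hz i
    have hle_norm : ∀ l, z l ≤ ‖z‖ := fun l => (le_abs_self _).trans (norm_le_pi_norm z l)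
    have := mulVec_apply_le_of_mem_rowStochastic hA hle_norm i j
    nlinarith [mul_nonneg (sub_nonneg.2 hδj) (norm_nonneg z),
      mul_nonneg (nonneg_of_mem_rowStochastic hA (i := i) (j := j)) (neg_nonneg.2 hzj)]
  refine (pi_norm_le_iff_of_nonempty _).2 fun i => abs_le.2 ⟨?_, hupper y hle i⟩
  have := hupper (-y) (fun i => (hge i).imp fun j h => ⟨h.1, neg_nonpos.2 h.2⟩) i
  rw [mulVec_neg, norm_neg] at this
  simpa using neg_le.1 this

theorem tendsto_pow_mulVec_nhds_zero_of_contracting (hA : A ∈ rowStochastic ℝ ι)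
    {V : Set (ι → ℝ)} (hV : ∀ y ∈ V, A *ᵥ y ∈ V) {m : ℕ} (hm : m ≠ 0) {r : ℝ} (hr₀ : 0 ≤ r)
    (hr₁ : r < 1) (hcontr : ∀ y ∈ V, ‖(A ^ m) *ᵥ y‖ ≤ r * ‖y‖) {y : ι → ℝ} (hy : y ∈ V) :
    Tendsto (fun t => (A ^ t) *ᵥ y) atTop (𝓝 0) := by
  have hVpow : ∀ t, ∀ y ∈ V, (A ^ t) *ᵥ y ∈ V := by
    intro t
    induction t with
    | zero => simp
    | succ t ih => intro y hy; rw [pow_succ', ← mulVec_mulVec]; exact hV _ (ih y hy)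
  have hblocks : ∀ q, ‖(A ^ (m * q)) *ᵥ y‖ ≤ r ^ q * ‖y‖ := by
    intro q
    induction q with
    | zero => simp
    | succ q ih =>
      calc ‖(A ^ (m * (q + 1))) *ᵥ y‖ = ‖(A ^ m) *ᵥ ((A ^ (m * q)) *ᵥ y)‖ := by
            rw [mulVec_mulVec, ← pow_add, mul_add_one, add_comm]
        _ ≤ r * ‖(A ^ (m * q)) *ᵥ y‖ := hcontr _ (hVpow _ _ hy)
        _ ≤ r * (r ^ q * ‖y‖) := by gcongr
        _ = r ^ (q + 1) * ‖y‖ := by ring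
  have hbound : ∀ t, ‖(A ^ t) *ᵥ y‖ ≤ r ^ (t / m) * ‖y‖ := fun t => by
    rw [← Nat.mod_add_div t m, pow_add, ← mulVec_mulVec,
      Nat.add_mul_div_left _ _ (Nat.pos_of_ne_zero hm), Nat.mod_div_self, zero_add]
    exact (norm_mulVec_le_norm_of_mem_rowStochastic (pow_mem hA _) _).trans (hblocks _)
  refine squeeze_zero_norm hbound ?_
  simpa using ((tendsto_pow_atTop_nhds_zero_of_lt_one hr₀ hr₁).comp
    (Nat.tendsto_div_const_atTop hm)).mul_const ‖y‖

lemma pow_mulVec_eq_self {v : ι → ℝ} (hv : A *ᵥ v = v) (t : ℕ) : (A ^ t) *ᵥ v = v := by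
  induction t with
  | zero => simp
  | succ t ih => rw [pow_succ, ← mulVec_mulVec, hv, ih]

lemma exists_pow_apply_pos_of_reflTransGen (hA : ∀ i j, 0 ≤ A i j) {i j : ι}
    (h : ReflTransGen (fun a b => 0 < A a b) i j) : ∃ t, 0 < (A ^ t) i j := by
  induction h with
  | refl => exact ⟨0, by simp⟩
  | tail _ hbc ih =>
    obtain ⟨t, ht⟩ := ih
    exact ⟨t + 1, pow_succ A t ▸ mul_apply_pos_of_pos (pow_apply_nonneg hA t) hA ht hbc⟩

/-- A positive diagonal lets a walk wait at its endpoint. -/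
lemma pow_apply_pos_of_le (hA : ∀ i j, 0 ≤ A i j) (hdiag : ∀ i, 0 < A i i) {i j : ι}
    {t t' : ℕ} (htt' : t ≤ t') (ht : 0 < (A ^ t) i j) : 0 < (A ^ t') i j := by
  induction t', htt' using Nat.le_induction with
  | base => exact ht
  | succ t' _ ih =>
    exact pow_succ A t' ▸ mul_apply_pos_of_pos (pow_apply_nonneg hA t') hA ih (hdiag j)

lemma exists_pow_apply_pos_of_forall_reflTransGen (hA : ∀ i j, 0 ≤ A i j)
    (hdiag : ∀ i, 0 < A i i) :
    ∃ m ≠ 0, ∀ i j, ReflTransGen (fun a b => 0 < A a b) i j → 0 < (A ^ m) i j := by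
  have hT : ∀ i j, ∃ t, ReflTransGen (fun a b => 0 < A a b) i j → 0 < (A ^ t) i j := by
    intro i j
    by_cases h : ReflTransGen (fun a b => 0 < A a b) i j
    · exact (exists_pow_apply_pos_of_reflTransGen hA h).imp fun t ht _ => ht
    · exact ⟨0, fun h' => absurd h' h⟩
  choose T hT using hT
  refine ⟨univ.sup (fun p : ι × ι => T p.1 p.2) + 1, Nat.succ_ne_zero _, fun i j h => ?_⟩
  refine pow_apply_pos_of_le hA hdiag ?_ (hT i j h)
  exact (le_sup (f := fun p : ι × ι => T p.1 p.2) (mem_univ (i, j))).trans (Nat.le_succ _)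

theorem tendsto_pow_mulVec_nhds_zero_of_sinks [Nonempty ι] {κ : Type*}
    (hA : A ∈ rowStochastic ℝ ι) (hdiag : ∀ i, 0 < A i i) (S : κ → Finset ι) (p : κ → ι → ℝ)
    (hp : ∀ k, ∀ i ∈ S k, 0 ≤ p k i) (hp_pos : ∀ k, 0 < ∑ i ∈ S k, p k i)
    (hinv : ∀ k y, ∑ i ∈ S k, p k i * (A *ᵥ y) i = ∑ i ∈ S k, p k i * y i)
    (hreach : ∀ i, ∃ k, ∀ j ∈ S k, ReflTransGen (fun a b => 0 < A a b) i j)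
    {y : ι → ℝ} (hy : ∀ k, ∑ i ∈ S k, p k i * y i = 0) :
    Tendsto (fun t => (A ^ t) *ᵥ y) atTop (𝓝 0) := by
  have hA₀ : ∀ i j, 0 ≤ A i j := fun _ _ => nonneg_of_mem_rowStochastic hA
  obtain ⟨m, hm, hpos⟩ := exists_pow_apply_pos_of_forall_reflTransGen hA₀ hdiag
  obtain ⟨δ, hδ₀, hδ⟩ := Finite.exists_pos_forall_le_of_pos fun q : ι × ι => (A ^ m) q.1 q.2
  have hδ₁ : δ ≤ 1 := by
    let i := Classical.arbitrary ι
    exact (hδ (i, i) (hpos i i .refl)).trans (le_one_of_mem_rowStochastic (pow_mem hA m))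
  let V : Set (ι → ℝ) := {z | ∀ k, ∑ i ∈ S k, p k i * z i = 0}
  have hsign : ∀ z ∈ V, ∀ i, ∃ j, δ ≤ (A ^ m) i j ∧ z j ≤ 0 := by
    intro z hz i
    obtain ⟨k, hk⟩ := hreach i
    obtain ⟨j, hj, hzj⟩ := exists_nonpos_of_sum_mul_eq_zero (hp k) (hp_pos k) (hz k)
    exact ⟨j, hδ (i, j) (hpos i j (hk j hj)), hzj⟩
  have hcontr : ∀ z ∈ V, ‖(A ^ m) *ᵥ z‖ ≤ (1 - δ) * ‖z‖ := by
    refine fun z hz => norm_mulVec_le_of_mem_rowStochastic (pow_mem hA m) (hsign z hz) fun i => ?_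
    obtain ⟨j, hj, hzj⟩ := hsign (-z) (fun k => by simp [mul_neg, sum_neg_distrib, hz k]) i
    exact ⟨j, hj, neg_nonpos.1 hzj⟩
  exact tendsto_pow_mulVec_nhds_zero_of_contracting hA (V := V)
    (fun z hz k => (hinv k z).trans (hz k)) hm (sub_nonneg.2 hδ₁) (sub_lt_self 1 hδ₀) hcontr hy

lemma mem_rowStochastic_of_apply_eq_div_sum {W P : Matrix ι ι ℝ} (hW : ∀ i j, 0 ≤ W i j)
    (hrow : ∀ i, 0 < ∑ j, W i j) (hP : ∀ i j, P i j = W i j / ∑ k, W i k) :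
    P ∈ rowStochastic ℝ ι :=
  mem_rowStochastic_iff_sum.2 ⟨fun i j => hP i j ▸ div_nonneg (hW i j) (hrow i).le,
    fun i => by simp only [hP, ← sum_div, div_self (hrow i).ne']⟩

lemma mul_eq_self_of_laplacian_mul_eq_zero {κ : Type*} {W P : Matrix ι ι ℝ} {H : Matrix ι κ ℝ}
    (hrow : ∀ i, ∑ j, W i j ≠ 0) (hP : ∀ i j, P i j = W i j / ∑ k, W i k)
    (hLH : (diagonal (fun i => ∑ j, W i j) - W) * H = 0) : P * H = H := by
  rw [Matrix.sub_mul, sub_eq_zero] at hLH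
  ext i k
  have hik := congrFun (congrFun hLH i) k
  rw [diagonal_mul] at hik
  rw [mul_apply]
  simp only [hP, div_mul_eq_mul_div, ← sum_div, ← mul_apply, ← hik]
  field_simp [hrow i]

end Matrix

open Matrix

theorem stmt_6_general {n s : ℕ} (hn : 1 ≤ n)
    (W : Matrix (Fin n) (Fin n) ℝ)
    (hWnn : ∀ i j, 0 ≤ W i j)
    (hrow : ∀ i, 0 < ∑ j, W i j)
    (S : Fin s → Finset (Fin n))
    (hsink : ∀ k, ∀ i ∈ S k, ∀ j, j ∉ S k → W i j = 0)
    (hSirr : ∀ k, ∀ i ∈ S k, ∀ j ∈ S k, i ≠ j →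
      Relation.TransGen (fun a b => a ∈ S k ∧ b ∈ S k ∧ 0 < W a b) i j)
    (hreach : ∀ i : Fin n, (∀ k, i ∉ S k) →
      ∃ j : Fin n, (∃ k, j ∈ S k) ∧ Relation.TransGen (fun a b => 0 < W a b) i j)
    (P : Matrix (Fin n) (Fin n) ℝ)
    (hP : ∀ i j, P i j = W i j / ∑ k, W i k)
    (L : Matrix (Fin n) (Fin n) ℝ)
    (hL : L = Matrix.diagonal (fun i => ∑ j, W i j) - W)
    -- H : the unique nonnegative matrix with H𝟙 = 𝟙, LH = 0 and boundary values
    (H : Matrix (Fin n) (Fin s) ℝ)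
    (hLH : L * H = 0)
    (hHone : ∀ k, ∀ i ∈ S k, H i k = 1)
    (hHzero : ∀ k l, l ≠ k → ∀ i ∈ S l, H i k = 0)
    -- π^{(k)} : the unique invariant probability vector of the restriction of P to S_k
    (π : Fin s → Fin n → ℝ)
    (hπnn : ∀ k i, 0 ≤ π k i)
    (hπsum : ∀ k, ∑ i ∈ S k, π k i = 1)
    (hπinv : ∀ k, ∀ j ∈ S k, ∑ i ∈ S k, π k i * P i j = π k j)
    (α : ℝ) (hα : α ∈ Set.Ioo (0 : ℝ) 1)
    (Pα : Matrix (Fin n) (Fin n) ℝ)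
    (hPα : Pα = α • (1 : Matrix (Fin n) (Fin n) ℝ) + (1 - α) • P)
    (x0 : Fin n → ℝ) (xbar : Fin s → ℝ)
    (hxbar : ∀ k, xbar k = ∑ i ∈ S k, π k i * x0 i) :
    Filter.Tendsto (fun t : ℕ => (Pα ^ t).mulVec x0) Filter.atTop
      (nhds (H.mulVec xbar)) := by
  obtain ⟨hα₀, hα₁⟩ := hα
  have : Nonempty (Fin n) := ⟨⟨0, hn⟩⟩
  subst hPα hL
  have hPst := mem_rowStochastic_of_apply_eq_div_sum hWnn hrow hP
  have hfix : (α • 1 + (1 - α) • P) *ᵥ (H *ᵥ xbar) = H *ᵥ xbar := by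
    rw [mulVec_mulVec, smul_one_add_smul_mul_eq_self
      (mul_eq_self_of_laplacian_mul_eq_zero (fun i => (hrow i).ne') hP hLH)]
  have hmass : ∀ k, ∑ i ∈ S k, π k i * (x0 - H *ᵥ xbar) i = 0 := fun k => by
    have hHx : ∀ i ∈ S k, π k i * (H *ᵥ xbar) i = π k i * xbar k := fun i hi => by
      rw [mulVec_apply_eq_of_apply_eq_one (hHone k i hi) fun l hlk => hHzero l k hlk.symm i hi]
    simp only [Pi.sub_apply, mul_sub, sum_sub_distrib, sum_congr rfl hHx, ← sum_mul, hπsum,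
      one_mul, ← hxbar k, sub_self]
  have hinv : ∀ k y, ∑ i ∈ S k, π k i * (P *ᵥ y) i = ∑ i ∈ S k, π k i * y i := fun k =>
    sum_mul_mulVec_eq_of_invariant (fun i hi j hj => by rw [hP, hsink k i hi j hj, zero_div])
      (hπinv k)
  have hreachα : ∀ i, ∃ k, ∀ j ∈ S k,
      ReflTransGen (fun a b => 0 < (α • 1 + (1 - α) • P) a b) i j := fun i =>
    (exists_forall_mem_reflTransGen hSirr hreach i).imp fun k h j hj =>
    ReflTransGen.mono (fun a b hab => smul_one_add_smul_apply_pos hα₀.le hα₁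
      (hP a b ▸ div_pos hab (hrow a))) _ _ (h j hj)
  have herr := tendsto_pow_mulVec_nhds_zero_of_sinks
    (smul_one_add_smul_mem_rowStochastic hPst hα₀.le hα₁.le)
    (smul_one_add_smul_apply_self_pos (fun _ _ => nonneg_of_mem_rowStochastic hPst) hα₀ hα₁.le)
    S π (fun k i _ => hπnn k i) (fun k => hπsum k ▸ one_pos)
    (fun k => sum_mul_smul_one_add_smul_mulVec_eq (hinv k)) hreachα hmass
  simpa [mulVec_sub, pow_mulVec_eq_self hfix] using herr.const_add (H *ᵥ xbar)

/-- Under the sink structure hypotheses, for every `α ∈ (0,1)` and every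
initial state `x(0)`, the averaging dynamics `x(t) = P_α^t x(0)` converges to `H x̄`,
where `x̄_k = ∑_{i ∈ S_k} π^{(k)}_i x_i(0)`. -/
theorem stmt_6 {n s : ℕ} (hn : 1 ≤ n) (hs : 1 ≤ s)
    (W : Matrix (Fin n) (Fin n) ℝ)
    (hWnn : ∀ i j, 0 ≤ W i j)
    (hrow : ∀ i, 0 < ∑ j, W i j)
    (S : Fin s → Finset (Fin n))
    (hSne : ∀ k, (S k).Nonempty)
    (hSdisj : ∀ k l, k ≠ l → Disjoint (S k) (S l))
    (hsink : ∀ k, ∀ i ∈ S k, ∀ j, j ∉ S k → W i j = 0)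
    (hSirr : ∀ k, ∀ i ∈ S k, ∀ j ∈ S k, i ≠ j →
      Relation.TransGen (fun a b => a ∈ S k ∧ b ∈ S k ∧ 0 < W a b) i j)
    (hreach : ∀ i : Fin n, (∀ k, i ∉ S k) →
      ∃ j : Fin n, (∃ k, j ∈ S k) ∧ Relation.TransGen (fun a b => 0 < W a b) i j)
    (P : Matrix (Fin n) (Fin n) ℝ)
    (hP : ∀ i j, P i j = W i j / ∑ k, W i k)
    (L : Matrix (Fin n) (Fin n) ℝ)
    (hL : L = Matrix.diagonal (fun i => ∑ j, W i j) - W)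
    -- H : the unique nonnegative matrix with H𝟙 = 𝟙, LH = 0 and boundary values
    (H : Matrix (Fin n) (Fin s) ℝ)
    (hHnn : ∀ i k, 0 ≤ H i k)
    (hHrow : ∀ i, ∑ k, H i k = 1)
    (hLH : L * H = 0)
    (hHone : ∀ k, ∀ i ∈ S k, H i k = 1)
    (hHzero : ∀ k l, l ≠ k → ∀ i ∈ S l, H i k = 0)
    -- π^{(k)} : the unique invariant probability vector of the restriction of P to S_k
    (π : Fin s → Fin n → ℝ)
    (hπsupp : ∀ k, ∀ i, i ∉ S k → π k i = 0)
    (hπnn : ∀ k i, 0 ≤ π k i)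
    (hπsum : ∀ k, ∑ i ∈ S k, π k i = 1)
    (hπinv : ∀ k, ∀ j ∈ S k, ∑ i ∈ S k, π k i * P i j = π k j)
    (α : ℝ) (hα : α ∈ Set.Ioo (0 : ℝ) 1)
    (Pα : Matrix (Fin n) (Fin n) ℝ)
    (hPα : Pα = α • (1 : Matrix (Fin n) (Fin n) ℝ) + (1 - α) • P)
    (x0 : Fin n → ℝ) (xbar : Fin s → ℝ)
    (hxbar : ∀ k, xbar k = ∑ i ∈ S k, π k i * x0 i) :
    Filter.Tendsto (fun t : ℕ => (Pα ^ t).mulVec x0) Filter.atTop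
      (nhds (H.mulVec xbar)) :=
  stmt_6_general hn W hWnn hrow S hsink hSirr hreach P hP L hL H hLH hHone hHzero π hπnn hπsum hπinv
    α hα Pα hPα x0 xbar hxbar
end

section
/- Under the sink structure hypotheses with all sink components singletons, S_k = {v_k} for k = 1,…,s (so that necessarily W_{v_k v_k} > 0 and W_{v_k j} = 0 for j ≠ v_k), the averaging dynamics x(t) = P_α^t x(0) with α ∈ (0,1) keeps each stubborn node's state constant, x_{v_k}(t) = x_{v_k}(0) for all t, and x(t) converges to H x̄ where x̄_k = x_{v_k}(0) for each k and H is the unique nonnegative matrix with H𝟙 = 𝟙, LH = 0, H_{v_k k} = 1 and H_{v_j k} = 0 for j ≠ k. -/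
open Matrix Filter

section Aux
variable {n s : ℕ} (M : Matrix (Fin n) (Fin n) ℝ) (v : Fin s → Fin n)

lemma pow_nn (hMnn : ∀ i j, 0 ≤ M i j) : ∀ t i j, 0 ≤ (M ^ t) i j := by
  intro t
  induction t with
  | zero => intro i j; simp [Matrix.one_apply]; positivity
  | succ t ih =>
    intro i j
    rw [pow_succ, Matrix.mul_apply]
    exact Finset.sum_nonneg fun l _ => mul_nonneg (ih i l) (hMnn l j)

lemma pow_row (hMrow : ∀ i, ∑ j, M i j = 1) : ∀ t i, ∑ j, (M ^ t) i j = 1 := by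
  intro t
  induction t with
  | zero => intro i; rw [pow_zero]; simp [Matrix.one_apply]
  | succ t ih =>
    intro i
    simp only [pow_succ, Matrix.mul_apply]
    rw [Finset.sum_comm]
    simp_rw [← Finset.mul_sum, hMrow, mul_one]
    exact ih i

lemma pow_sink (hsinkrow : ∀ k j, M (v k) j = if j = v k then 1 else 0) :
    ∀ t k j, (M ^ t) (v k) j = if j = v k then 1 else 0 := by
  intro t
  induction t with
  | zero => intro k j; simp [Matrix.one_apply, eq_comm]
  | succ t ih =>
    intro k j
    rw [pow_succ', Matrix.mul_apply]
    rw [Finset.sum_eq_single (v k)]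
    · rw [hsinkrow, if_pos rfl, one_mul, ih]
    · intro b _ hb; rw [hsinkrow, if_neg hb, zero_mul]
    · simp

lemma key {n s : ℕ} (hn : 1 ≤ n) (M : Matrix (Fin n) (Fin n) ℝ)
    (hMnn : ∀ i j, 0 ≤ M i j) (hMrow : ∀ i, ∑ j, M i j = 1)
    (v : Fin s → Fin n) (hv : Function.Injective v)
    (hsinkrow : ∀ k j, M (v k) j = if j = v k then 1 else 0)
    (hreachM : ∀ i, ∃ k t, 0 < (M ^ t) i (v k))
    (y : Fin n → ℝ) (hy : ∀ k, y (v k) = 0) :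
    Filter.Tendsto (fun t : ℕ => (M ^ t).mulVec y) Filter.atTop (nhds 0) := by
  -- preservation of vanishing at sinks
  have hvan : ∀ t (z : Fin n → ℝ), (∀ k, z (v k) = 0) → ∀ k, ((M ^ t).mulVec z) (v k) = 0 := by
    intro t z hz k
    rw [Matrix.mulVec, dotProduct]
    rw [Finset.sum_eq_single (v k)]
    · rw [pow_sink M v hsinkrow, if_pos rfl, one_mul, hz]
    · intro b _ hb; rw [pow_sink M v hsinkrow, if_neg hb, zero_mul]
    · simp
  -- nonexpansiveness of any nonneg row-stochastic matrix
  have hnonexp : ∀ (A : Matrix (Fin n) (Fin n) ℝ), (∀ i j, 0 ≤ A i j) →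
      (∀ i, ∑ j, A i j = 1) → ∀ z : Fin n → ℝ, ‖A.mulVec z‖ ≤ ‖z‖ := by
    intro A hAnn hArow z
    rw [pi_norm_le_iff_of_nonneg (norm_nonneg z)]
    intro i
    calc ‖A.mulVec z i‖ = |∑ j, A i j * z j| := rfl
      _ ≤ ∑ j, |A i j * z j| := Finset.abs_sum_le_sum_abs _ _
      _ ≤ ∑ j, A i j * ‖z‖ := by
          refine Finset.sum_le_sum fun j _ => ?_
          rw [abs_mul, abs_of_nonneg (hAnn i j)]
          exact mul_le_mul_of_nonneg_left (by simpa using norm_le_pi_norm z j) (hAnn i j)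
      _ = ‖z‖ := by rw [← Finset.sum_mul, hArow, one_mul]
  -- monotonicity of positivity at sink columns
  have hmono : ∀ i k t t', t ≤ t' → 0 < (M ^ t) i (v k) → 0 < (M ^ t') i (v k) := by
    intro i k t t' htt hpos
    induction t' with
    | zero => exact Nat.le_zero.mp htt ▸ hpos
    | succ u ih =>
      rcases Nat.lt_or_ge t (u+1) with h | h
      · have hu : 0 < (M ^ u) i (v k) := ih (Nat.lt_succ_iff.mp h)
        have : (M ^ u) i (v k) * M (v k) (v k) ≤ (M ^ (u+1)) i (v k) := by
          rw [pow_succ, Matrix.mul_apply]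
          exact Finset.single_le_sum (f := fun j => (M ^ u) i j * M j (v k))
            (fun j _ => mul_nonneg (pow_nn M hMnn u i j) (hMnn j (v k))) (Finset.mem_univ _)
        rw [hsinkrow, if_pos rfl, mul_one] at this
        exact lt_of_lt_of_le hu this
      · have : t = u + 1 := le_antisymm htt h
        exact this ▸ hpos
  -- choose N
  choose k t ht using hreachM
  have hne : Nonempty (Fin n) := ⟨⟨0, hn⟩⟩
  set N : ℕ := max 1 (Finset.univ.sup t) with hNdef
  have hN1 : 1 ≤ N := le_max_left _ _
  have hposN : ∀ i, 0 < (M ^ N) i (v (k i)) := fun i =>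
    hmono i (k i) (t i) N (le_trans (Finset.le_sup (Finset.mem_univ i)) (le_max_right _ _)) (ht i)
  set A : Matrix (Fin n) (Fin n) ℝ := M ^ N with hAdef
  have hAnn : ∀ i j, 0 ≤ A i j := pow_nn M hMnn N
  have hArow : ∀ i, ∑ j, A i j = 1 := pow_row M hMrow N
  set c : ℝ := Finset.univ.inf' (Finset.univ_nonempty) (fun i => ∑ k', A i (v k')) with hcdef
  set S : Finset (Fin n) := Finset.univ.image v with hSdef
  have hsumS : ∀ i, ∑ j ∈ S, A i j = ∑ k', A i (v k') := by
    intro i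
    rw [hSdef, Finset.sum_image (fun a _ b _ hab => hv hab)]
  have hc0 : 0 < c := by
    rw [hcdef, Finset.lt_inf'_iff]
    intro i _
    exact Finset.sum_pos' (fun k' _ => hAnn i (v k')) ⟨k i, Finset.mem_univ _, hposN i⟩
  have hcle : ∀ i, c ≤ ∑ k', A i (v k') := fun i =>
    Finset.inf'_le _ (Finset.mem_univ i)
  have hc1 : c ≤ 1 := by
    obtain ⟨i⟩ := hne
    refine le_trans (hcle i) ?_
    rw [← hsumS i, ← hArow i]
    exact Finset.sum_le_sum_of_subset_of_nonneg (Finset.subset_univ S)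
      (fun j _ _ => hAnn i j)
  -- contraction step
  have hcontr : ∀ z : Fin n → ℝ, (∀ k', z (v k') = 0) → ‖A.mulVec z‖ ≤ (1 - c) * ‖z‖ := by
    intro z hz
    have h1c : 0 ≤ 1 - c := by linarith
    rw [pi_norm_le_iff_of_nonneg (mul_nonneg h1c (norm_nonneg z))]
    intro i
    have hzS : ∀ j ∈ S, z j = 0 := by
      intro j hj
      obtain ⟨k', _, rfl⟩ := Finset.mem_image.mp hj
      exact hz k'
    calc ‖A.mulVec z i‖ = |∑ j, A i j * z j| := rfl
      _ ≤ ∑ j, |A i j * z j| := Finset.abs_sum_le_sum_abs _ _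
      _ = ∑ j ∈ S, |A i j * z j| + ∑ j ∈ Sᶜ, |A i j * z j| :=
          (Finset.sum_add_sum_compl S _).symm
      _ ≤ 0 + (∑ j ∈ Sᶜ, A i j) * ‖z‖ := by
          refine add_le_add ?_ ?_
          · refine le_of_eq (Finset.sum_eq_zero fun j hj => ?_)
            rw [hzS j hj, mul_zero, abs_zero]
          · rw [Finset.sum_mul]
            refine Finset.sum_le_sum fun j _ => ?_
            rw [abs_mul, abs_of_nonneg (hAnn i j)]
            exact mul_le_mul_of_nonneg_left (by simpa using norm_le_pi_norm z j) (hAnn i j)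
      _ ≤ (1 - c) * ‖z‖ := by
          rw [zero_add]
          refine mul_le_mul_of_nonneg_right ?_ (norm_nonneg z)
          have : ∑ j ∈ S, A i j + ∑ j ∈ Sᶜ, A i j = 1 := by
            rw [Finset.sum_add_sum_compl, hArow]
          have h2 := hcle i
          rw [← hsumS i] at h2
          linarith
  -- iterated contraction
  have hiter : ∀ m : ℕ, ‖(M ^ (N * m)).mulVec y‖ ≤ (1 - c) ^ m * ‖y‖ := by
    intro m
    induction m with
    | zero => simp
    | succ m ih =>
      have hsplit : (M ^ (N * (m + 1))).mulVec y = A.mulVec ((M ^ (N * m)).mulVec y) := by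
        rw [mulVec_mulVec, hAdef, ← pow_add]
        ring_nf
      rw [hsplit]
      calc ‖A.mulVec ((M ^ (N * m)).mulVec y)‖
          ≤ (1 - c) * ‖(M ^ (N * m)).mulVec y‖ := hcontr _ (hvan (N * m) y hy)
        _ ≤ (1 - c) * ((1 - c) ^ m * ‖y‖) :=
            mul_le_mul_of_nonneg_left ih (by linarith)
        _ = (1 - c) ^ (m + 1) * ‖y‖ := by ring
  -- general t
  have hbound : ∀ tt : ℕ, ‖(M ^ tt).mulVec y‖ ≤ (1 - c) ^ (tt / N) * ‖y‖ := by
    intro tt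
    have hsplit : (M ^ tt).mulVec y = (M ^ (tt % N)).mulVec ((M ^ (N * (tt / N))).mulVec y) := by
      rw [mulVec_mulVec, ← pow_add]
      have : tt % N + N * (tt / N) = tt := Nat.mod_add_div tt N
      rw [this]
    rw [hsplit]
    exact le_trans (hnonexp (M ^ (tt % N)) (pow_nn M hMnn _) (pow_row M hMrow _) _)
      (hiter (tt / N))
  refine squeeze_zero_norm hbound ?_
  have hdiv : Filter.Tendsto (fun tt : ℕ => tt / N) atTop atTop := by
    refine Filter.tendsto_atTop_atTop.mpr fun b => ⟨b * N, fun a ha => ?_⟩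
    exact (Nat.le_div_iff_mul_le (by omega)).mpr ha
  have habs : |1 - c| < 1 := by rw [abs_lt]; constructor <;> linarith
  have h1 : Filter.Tendsto (fun tt : ℕ => (1 - c) ^ (tt / N)) atTop (nhds 0) :=
    (tendsto_pow_atTop_nhds_zero_of_abs_lt_one habs).comp hdiv
  simpa using h1.mul_const ‖y‖
end Aux


/-- With all sink components singletons (stubborn nodes `v_1, …, v_s`),
the averaging dynamics keeps each stubborn node's state constant and converges to
`H x̄` with `x̄_k = x_{v_k}(0)`, `H` being the unique nonnegative matrix with
`H𝟙 = 𝟙`, `LH = 0`, `H_{v_k k} = 1`, `H_{v_j k} = 0` for `j ≠ k`. -/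
theorem stmt_9 {n s : ℕ} (hn : 1 ≤ n) (hs : 1 ≤ s)
    (W : Matrix (Fin n) (Fin n) ℝ)
    (hWnn : ∀ i j, 0 ≤ W i j)
    (hrow : ∀ i, 0 < ∑ j, W i j)
    (v : Fin s → Fin n) (hv : Function.Injective v)
    (hsink : ∀ k, ∀ j, j ≠ v k → W (v k) j = 0)
    (hreach : ∀ i : Fin n, (∀ k, i ≠ v k) →
      ∃ k, Relation.TransGen (fun a b => 0 < W a b) i (v k))
    (P : Matrix (Fin n) (Fin n) ℝ)
    (hP : ∀ i j, P i j = W i j / ∑ k, W i k)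
    (L : Matrix (Fin n) (Fin n) ℝ)
    (hL : L = Matrix.diagonal (fun i => ∑ j, W i j) - W)
    (H : Matrix (Fin n) (Fin s) ℝ)
    (hHnn : ∀ i k, 0 ≤ H i k)
    (hHrow : ∀ i, ∑ k, H i k = 1)
    (hLH : L * H = 0)
    (hHone : ∀ k, H (v k) k = 1)
    (hHzero : ∀ k j, j ≠ k → H (v j) k = 0)
    (α : ℝ) (hα : α ∈ Set.Ioo (0 : ℝ) 1)
    (Pα : Matrix (Fin n) (Fin n) ℝ)
    (hPα : Pα = α • (1 : Matrix (Fin n) (Fin n) ℝ) + (1 - α) • P)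
    (x0 : Fin n → ℝ) :
    (∀ t : ℕ, ∀ k, (Pα ^ t).mulVec x0 (v k) = x0 (v k)) ∧
    Filter.Tendsto (fun t : ℕ => (Pα ^ t).mulVec x0) Filter.atTop
      (nhds (H.mulVec (fun k => x0 (v k)))) ∧
    (∀ H' : Matrix (Fin n) (Fin s) ℝ,
      (∀ i k, 0 ≤ H' i k) → (∀ i, ∑ k, H' i k = 1) → L * H' = 0 →
      (∀ k, H' (v k) k = 1) → (∀ k j, j ≠ k → H' (v j) k = 0) → H' = H) := by
  obtain ⟨hα0, hα1⟩ := hα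
  have hw : ∀ i, 0 < ∑ j, W i j := hrow
  have hPnn : ∀ i j, 0 ≤ P i j := fun i j => by
    rw [hP]; exact div_nonneg (hWnn i j) (le_of_lt (hw i))
  have hProw : ∀ i, ∑ j, P i j = 1 := fun i => by
    simp_rw [hP]
    rw [← Finset.sum_div, div_self (ne_of_gt (hw i))]
  have hMapply : ∀ i j, Pα i j = α * (if i = j then 1 else 0) + (1 - α) * P i j := by
    intro i j
    rw [hPα]
    simp [Matrix.add_apply, Matrix.smul_apply, Matrix.one_apply]
  have hMnn : ∀ i j, 0 ≤ Pα i j := fun i j => by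
    rw [hMapply]
    have := hPnn i j
    split <;> nlinarith
  have hMrow : ∀ i, ∑ j, Pα i j = 1 := fun i => by
    simp_rw [hMapply]
    rw [Finset.sum_add_distrib, ← Finset.mul_sum, ← Finset.mul_sum, hProw,
      Finset.sum_ite_eq Finset.univ i (fun _ => (1:ℝ))]
    simp
  have hwsink : ∀ k, ∑ j, W (v k) j = W (v k) (v k) := fun k => by
    rw [Finset.sum_eq_single (v k)]
    · intro b _ hb; exact hsink k b hb
    · simp
  have hPsink : ∀ k j, P (v k) j = if j = v k then 1 else 0 := by
    intro k j
    rw [hP]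
    by_cases h : j = v k
    · rw [if_pos h, h, hwsink k, div_self]
      rw [← hwsink k]; exact ne_of_gt (hw (v k))
    · rw [if_neg h, hsink k j h, zero_div]
  have hsinkrow : ∀ k j, Pα (v k) j = if j = v k then 1 else 0 := by
    intro k j
    rw [hMapply, hPsink]
    by_cases h : j = v k
    · subst h; simp only [if_pos rfl]; ring
    · have h2 : ¬ (v k = j) := fun hh => h hh.symm
      simp [h, h2]
  have hstep : ∀ a b, 0 < W a b → 0 < Pα a b := by
    intro a b hab
    rw [hMapply]
    have hPab : 0 < P a b := by
      rw [hP]; exact div_pos hab (hw a)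
    by_cases h : a = b
    · rw [if_pos h]; nlinarith
    · rw [if_neg h]; nlinarith
  have htrans : ∀ a b : Fin n, Relation.TransGen (fun a b => 0 < W a b) a b →
      ∃ t, 0 < (Pα ^ t) a b := by
    intro a b hpath
    induction hpath with
    | single hab => exact ⟨1, by rw [pow_one]; exact hstep _ _ hab⟩
    | @tail b c hpath hbc ih =>
      obtain ⟨t, hab⟩ := ih
      refine ⟨t + 1, ?_⟩
      have hle : (Pα ^ t) a b * Pα b c ≤ (Pα ^ (t+1)) a c := by
        rw [pow_succ, Matrix.mul_apply]
        exact Finset.single_le_sum (f := fun j => (Pα ^ t) a j * Pα j c)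
          (fun j _ => mul_nonneg (pow_nn Pα hMnn t a j) (hMnn j c)) (Finset.mem_univ _)
      exact lt_of_lt_of_le (mul_pos hab (hstep _ _ hbc)) hle
  have hreachM : ∀ i, ∃ k t, 0 < (Pα ^ t) i (v k) := by
    intro i
    by_cases h : ∀ k, i ≠ v k
    · obtain ⟨k, hpath⟩ := hreach i h
      exact ⟨k, htrans i (v k) hpath⟩
    · push_neg at h
      obtain ⟨k, hk⟩ := h
      exact ⟨k, 0, by rw [pow_zero, hk]; simp [Matrix.one_apply]⟩
  have part1 : ∀ t : ℕ, ∀ k, (Pα ^ t).mulVec x0 (v k) = x0 (v k) := by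
    intro t k
    rw [Matrix.mulVec, dotProduct, Finset.sum_eq_single (v k)]
    · rw [pow_sink Pα v hsinkrow, if_pos rfl, one_mul]
    · intro b _ hb; rw [pow_sink Pα v hsinkrow, if_neg hb, zero_mul]
    · simp
  have hfix : ∀ G : Matrix (Fin n) (Fin s) ℝ, L * G = 0 → Pα * G = G := by
    intro G hLG
    have hDG : ∀ i k, (∑ j, W i j) * G i k = ∑ j, W i j * G j k := by
      intro i k
      have h1 : (Matrix.diagonal (fun i => ∑ j, W i j) * G - W * G) i k = 0 := by
        rw [← Matrix.sub_mul, ← hL, hLG]; simp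
      have h2 : (Matrix.diagonal (fun i => ∑ j, W i j) * G) i k = (∑ j, W i j) * G i k := by
        rw [Matrix.diagonal_mul]
      rw [Matrix.sub_apply, h2, Matrix.mul_apply] at h1
      linarith
    have hPG : P * G = G := by
      ext i k
      rw [Matrix.mul_apply]
      simp_rw [hP, div_mul_eq_mul_div]
      rw [← Finset.sum_div, ← hDG i k, mul_comm, mul_div_assoc,
        div_self (ne_of_gt (hw i)), mul_one]
    rw [hPα, Matrix.add_mul, Matrix.smul_mul, Matrix.smul_mul, Matrix.one_mul, hPG, ← add_smul]
    simp
  have hpowfixH : ∀ (G : Matrix (Fin n) (Fin s) ℝ), Pα * G = G → ∀ t : ℕ, (Pα ^ t) * G = G := by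
    intro G hG t
    induction t with
    | zero => simp
    | succ t ih => rw [pow_succ', Matrix.mul_assoc, ih, hG]
  have hPαH : Pα * H = H := hfix H hLH
  set xb : Fin s → ℝ := fun k => x0 (v k) with hxb
  set z : Fin n → ℝ := H.mulVec xb with hz
  have hzsink : ∀ k, z (v k) = x0 (v k) := by
    intro k
    rw [hz, Matrix.mulVec, dotProduct, Finset.sum_eq_single k]
    · rw [hHone k]; simp [hxb]
    · intro b _ hb; rw [hHzero b k (Ne.symm hb), zero_mul]
    · simp
  set y : Fin n → ℝ := x0 - z with hy
  have hysink : ∀ k, y (v k) = 0 := fun k => by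
    simp [hy, hzsink k]
  have hdecomp : ∀ t : ℕ, (Pα ^ t).mulVec x0 = z + (Pα ^ t).mulVec y := by
    intro t
    have hx0 : x0 = y + z := by rw [hy]; abel
    conv_lhs => rw [hx0]
    rw [Matrix.mulVec_add]
    have hzz : (Pα ^ t).mulVec z = z := by
      rw [hz, mulVec_mulVec, hpowfixH H hPαH t]
    rw [hzz]
    abel
  have part2 : Filter.Tendsto (fun t : ℕ => (Pα ^ t).mulVec x0) Filter.atTop
      (nhds (H.mulVec (fun k => x0 (v k)))) := by
    have hkey := key hn Pα hMnn hMrow v hv hsinkrow hreachM y hysink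
    have hlim := hkey.const_add z
    simp_rw [← hdecomp] at hlim
    simpa [hz, hxb] using hlim
  refine ⟨part1, part2, ?_⟩
  intro H' hH'nn hH'row hLH' hH'one hH'zero
  have hPαH' : Pα * H' = H' := hfix H' hLH'
  ext i k0
  set g : Fin n → ℝ := fun i => H' i k0 - H i k0 with hg
  have hgsink : ∀ j, g (v j) = 0 := by
    intro j
    by_cases h : j = k0
    · subst h; simp [hg, hH'one j, hHone j]
    · simp [hg, hH'zero k0 j h, hHzero k0 j h]
  have hgfix : Pα.mulVec g = g := by
    funext a
    have h1 : (Pα * H') a k0 = H' a k0 := by rw [hPαH']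
    have h2 : (Pα * H) a k0 = H a k0 := by rw [hPαH]
    rw [Matrix.mul_apply] at h1 h2
    simp only [hg, Matrix.mulVec, dotProduct, mul_sub, Finset.sum_sub_distrib]
    rw [h1, h2]
  have hgfixt : ∀ t : ℕ, (Pα ^ t).mulVec g = g := by
    intro t
    induction t with
    | zero => simp
    | succ t ih => rw [pow_succ', ← mulVec_mulVec, ih, hgfix]
  have hlim := key hn Pα hMnn hMrow v hv hsinkrow hreachM g hgsink
  simp_rw [hgfixt] at hlim
  have hg0 : g = 0 := tendsto_nhds_unique tendsto_const_nhds hlim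
  have hgi := congrFun hg0 i
  simp only [hg, Pi.zero_apply] at hgi
  linarith
end

section
/- Under the sink structure hypotheses, for every vector of boundary values x̄ ∈ ℝ^s there exists a unique x ∈ ℝ^n solving the Laplace equation Lx = 0 with boundary conditions x_i = x̄_k for all i ∈ S_k and all k = 1,…,s; this solution is x = H x̄, where H is the unique nonnegative matrix with H𝟙 = 𝟙, LH = 0 and boundary values H_{ik} = 1 on S_k, H_{ik} = 0 on S_{−k}. -/
open Matrix

/-- If `y a` attains the max `M`, `W a b > 0`, and `y` is harmonic at `a`,
then `y b = M`. -/
lemma aux_max_step {n : ℕ} (W : Matrix (Fin n) (Fin n) ℝ)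
    (hWnn : ∀ i j, 0 ≤ W i j)
    (y : Fin n → ℝ) (M : ℝ) (hM : ∀ j, y j ≤ M)
    (hLy : ∀ i, (∑ j, W i j) * y i = ∑ j, W i j * y j)
    {a b : Fin n} (ha : y a = M) (hab : 0 < W a b) : y b = M := by
  have h0 : ∑ j, W a j * (M - y j) = 0 := by
    have h := hLy a
    rw [ha] at h
    have : ∑ j, W a j * (M - y j) = (∑ j, W a j) * M - ∑ j, W a j * y j := by
      rw [Finset.sum_mul]
      rw [← Finset.sum_sub_distrib]
      congr 1; ext j; ring
    rw [this, h]; ring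
  have hnn : ∀ j ∈ Finset.univ, 0 ≤ W a j * (M - y j) := fun j _ =>
    mul_nonneg (hWnn a j) (by linarith [hM j])
  have := (Finset.sum_eq_zero_iff_of_nonneg hnn).mp h0 b (Finset.mem_univ b)
  rcases mul_eq_zero.mp this with h1 | h2
  · exact absurd h1 (ne_of_gt hab)
  · linarith

/-- Maximum principle: harmonic `y` vanishing on all sinks satisfies `y ≤ 0`. -/
lemma aux_le_zero {n s : ℕ} (hn : 1 ≤ n)
    (W : Matrix (Fin n) (Fin n) ℝ)
    (hWnn : ∀ i j, 0 ≤ W i j)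
    (S : Fin s → Finset (Fin n))
    (hreach : ∀ i : Fin n, (∀ k, i ∉ S k) →
      ∃ j : Fin n, (∃ k, j ∈ S k) ∧ Relation.TransGen (fun a b => 0 < W a b) i j)
    (y : Fin n → ℝ)
    (hLy : ∀ i, (∑ j, W i j) * y i = ∑ j, W i j * y j)
    (hy0 : ∀ k, ∀ i ∈ S k, y i = 0) :
    ∀ i, y i ≤ 0 := by
  have hne : (Finset.univ : Finset (Fin n)).Nonempty := by
    exact ⟨⟨0, hn⟩, Finset.mem_univ _⟩
  set M := Finset.univ.sup' hne y with hMdef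
  have hM : ∀ j, y j ≤ M := fun j => Finset.le_sup' y (Finset.mem_univ j)
  have hMle : M ≤ 0 := by
    by_contra hpos
    push_neg at hpos
    obtain ⟨i, _, hi⟩ := Finset.exists_mem_eq_sup' hne y
    have hyi : y i = M := hi.symm
    have hiS : ∀ k, i ∉ S k := by
      intro k hik
      have := hy0 k i hik
      rw [this] at hyi; linarith
    obtain ⟨j, ⟨k, hjk⟩, hpath⟩ := hreach i hiS
    -- propagate max along path
    have hprop : ∀ a b : Fin n, Relation.TransGen (fun a b => 0 < W a b) a b →
        y a = M → y b = M := by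
      intro a b hab
      induction hab with
      | single h => intro ha; exact aux_max_step W hWnn y M hM hLy ha h
      | tail _ h ih => intro ha; exact aux_max_step W hWnn y M hM hLy (ih ha) h
    have : y j = M := hprop i j hpath hyi
    rw [hy0 k j hjk] at this
    linarith
  intro i; exact le_trans (hM i) hMle

/-- Under the sink structure hypotheses, for every boundary vector
`x̄ ∈ ℝ^s` there is a unique solution of the Laplace equation `Lx = 0` with boundary
conditions `x_i = x̄_k` on `S_k`, and this solution is `x = H x̄`. -/
theorem stmt_10 {n s : ℕ} (hn : 1 ≤ n) (hs : 1 ≤ s)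
    (W : Matrix (Fin n) (Fin n) ℝ)
    (hWnn : ∀ i j, 0 ≤ W i j)
    (hrow : ∀ i, 0 < ∑ j, W i j)
    (S : Fin s → Finset (Fin n))
    (hSne : ∀ k, (S k).Nonempty)
    (hSdisj : ∀ k l, k ≠ l → Disjoint (S k) (S l))
    (hsink : ∀ k, ∀ i ∈ S k, ∀ j, j ∉ S k → W i j = 0)
    (hSirr : ∀ k, ∀ i ∈ S k, ∀ j ∈ S k, i ≠ j →
      Relation.TransGen (fun a b => a ∈ S k ∧ b ∈ S k ∧ 0 < W a b) i j)
    (hreach : ∀ i : Fin n, (∀ k, i ∉ S k) →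
      ∃ j : Fin n, (∃ k, j ∈ S k) ∧ Relation.TransGen (fun a b => 0 < W a b) i j)
    (L : Matrix (Fin n) (Fin n) ℝ)
    (hL : L = Matrix.diagonal (fun i => ∑ j, W i j) - W)
    (H : Matrix (Fin n) (Fin s) ℝ)
    (hHnn : ∀ i k, 0 ≤ H i k)
    (hHrow : ∀ i, ∑ k, H i k = 1)
    (hLH : L * H = 0)
    (hHone : ∀ k, ∀ i ∈ S k, H i k = 1)
    (hHzero : ∀ k l, l ≠ k → ∀ i ∈ S l, H i k = 0)
    (xbar : Fin s → ℝ) :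
    (L.mulVec (H.mulVec xbar) = 0 ∧
      ∀ k, ∀ i ∈ S k, H.mulVec xbar i = xbar k) ∧
    (∀ x : Fin n → ℝ,
      (L.mulVec x = 0 ∧ ∀ k, ∀ i ∈ S k, x i = xbar k) → x = H.mulVec xbar) := by
  have hLHx : L.mulVec (H.mulVec xbar) = 0 := by
    rw [Matrix.mulVec_mulVec, hLH, Matrix.zero_mulVec]
  have hbdry : ∀ k, ∀ i ∈ S k, H.mulVec xbar i = xbar k := by
    intro k i hik
    have hrfl : (H *ᵥ xbar) i = ∑ l, H i l * xbar l := rfl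
    rw [hrfl, Finset.sum_eq_single k]
    · rw [hHone k i hik, one_mul]
    · intro l _ hlk
      rw [hHzero l k (Ne.symm hlk) i hik, zero_mul]
    · intro h; exact absurd (Finset.mem_univ k) h
  refine ⟨⟨hLHx, hbdry⟩, ?_⟩
  intro x ⟨hLx, hxb⟩
  -- harmonicity rewriting
  have harm : ∀ z : Fin n → ℝ, L.mulVec z = 0 →
      ∀ i, (∑ j, W i j) * z i = ∑ j, W i j * z j := by
    intro z hz i
    have h := congrFun hz i
    rw [hL] at h
    rw [Matrix.sub_mulVec] at h
    simp only [Pi.sub_apply, Pi.zero_apply, Matrix.mulVec_diagonal] at h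
    have heq : Matrix.mulVec W z i = ∑ j, W i j * z j := rfl
    rw [heq, sub_eq_zero] at h
    exact h
  set y : Fin n → ℝ := x - H.mulVec xbar with hy
  have hLy0 : L.mulVec y = 0 := by
    rw [hy, Matrix.mulVec_sub, hLx, hLHx, sub_zero]
  have hy0 : ∀ k, ∀ i ∈ S k, y i = 0 := by
    intro k i hik
    simp only [hy, Pi.sub_apply, hxb k i hik, hbdry k i hik, sub_self]
  have h1 : ∀ i, y i ≤ 0 :=
    aux_le_zero hn W hWnn S hreach y (harm y hLy0) hy0
  have h2 : ∀ i, (-y) i ≤ 0 := by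
    have hLy0' : L.mulVec (-y) = 0 := by rw [Matrix.mulVec_neg, hLy0, neg_zero]
    refine aux_le_zero hn W hWnn S hreach (-y) (harm (-y) hLy0') ?_
    intro k i hik; simp [hy0 k i hik]
  funext i
  have : y i = 0 := le_antisymm (h1 i) (by have := h2 i; simp at this; linarith)
  have := sub_eq_zero.mp this
  exact this
end

section
/- Under the sink structure hypotheses with s ≥ 2 and with the restriction of W to R × R symmetric, let h ∈ ℝ^n be the k-th column of H, i.e., the unique vector with (Lh)_i = 0 for i ∈ R, h_i = 1 for i ∈ S_k and h_i = 0 for i ∈ S_{−k}. Then h minimizes the energy dissipation with respect to the symmetrized weights: for every y ∈ ℝ^n with y_i = 1 for all i ∈ S_k and y_i = 0 for all i ∈ S_{−k}, one has (1/2)∑_{i,j} Ŵ_{ij}(h_i − h_j)^2 ≤ (1/2)∑_{i,j} Ŵ_{ij}(y_i − y_j)^2. -/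
open Matrix

/-! Dirichlet principle. For a symmetric nonnegative weight matrix `A`, write `y = h + g`.
The energy splits as `E(h) + E(g) + 2 ∑ᵢ∑ⱼ Aᵢⱼ (hᵢ - hⱼ)(gᵢ - gⱼ)`, and by symmetry the cross
term equals `2 ∑ᵢ gᵢ ∑ⱼ Aᵢⱼ (hᵢ - hⱼ)`. Each summand vanishes: off the sinks `h` is harmonic for
`W`, whose rows agree there with those of `Ŵ`, and on the sinks `g = y - h = 0`. Hence
`E(y) = E(h) + E(g) ≥ E(h)`. -/

namespace Matrix

variable {ι : Type*} [Fintype ι]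

def dirichletEnergy (A : Matrix ι ι ℝ) (x : ι → ℝ) : ℝ :=
  ∑ i, ∑ j, A i j * (x i - x j) ^ 2

theorem dirichletEnergy_nonneg {A : Matrix ι ι ℝ} (hA : ∀ i j, 0 ≤ A i j) (x : ι → ℝ) :
    0 ≤ A.dirichletEnergy x :=
  Finset.sum_nonneg fun i _ => Finset.sum_nonneg fun j _ => mul_nonneg (hA i j) (sq_nonneg _)

theorem dirichletEnergy_add (A : Matrix ι ι ℝ) (h g : ι → ℝ) :
    A.dirichletEnergy (h + g) = A.dirichletEnergy h + A.dirichletEnergy g +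
      2 * ∑ i, ∑ j, A i j * (h i - h j) * (g i - g j) := by
  simp only [dirichletEnergy, Finset.mul_sum, ← Finset.sum_add_distrib, Pi.add_apply]
  exact Finset.sum_congr rfl fun i _ => Finset.sum_congr rfl fun j _ => by ring

theorem IsSymm.sum_sum_mul_sub_mul_sub {A : Matrix ι ι ℝ} (hA : A.IsSymm) (h g : ι → ℝ) :
    ∑ i, ∑ j, A i j * (h i - h j) * (g i - g j) = 2 * ∑ i, g i * ∑ j, A i j * (h i - h j) := by
  have hswap : ∑ i, ∑ j, A i j * (h i - h j) * g j = -∑ i, ∑ j, A i j * (h i - h j) * g i := by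
    rw [Finset.sum_comm, ← Finset.sum_neg_distrib]
    refine Finset.sum_congr rfl fun i _ => ?_
    rw [← Finset.sum_neg_distrib]
    exact Finset.sum_congr rfl fun j _ => by rw [hA.apply]; ring
  calc ∑ i, ∑ j, A i j * (h i - h j) * (g i - g j)
      = ∑ i, ∑ j, A i j * (h i - h j) * g i - ∑ i, ∑ j, A i j * (h i - h j) * g j := by
        simp only [← Finset.sum_sub_distrib]
        exact Finset.sum_congr rfl fun i _ => Finset.sum_congr rfl fun j _ => by ring
    _ = 2 * ∑ i, g i * ∑ j, A i j * (h i - h j) := by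
        rw [hswap, sub_neg_eq_add, ← two_mul]
        simp only [Finset.mul_sum]
        exact Finset.sum_congr rfl fun i _ => Finset.sum_congr rfl fun j _ => by ring

theorem dirichletEnergy_le_of_harmonic {A : Matrix ι ι ℝ} (hA : A.IsSymm)
    (hA0 : ∀ i j, 0 ≤ A i j) {B : Set ι} {h y : ι → ℝ}
    (hh : ∀ i ∉ B, ∑ j, A i j * (h i - h j) = 0) (hy : ∀ i ∈ B, y i = h i) :
    A.dirichletEnergy h ≤ A.dirichletEnergy y := by
  have hcross : ∑ i, (y - h) i * ∑ j, A i j * (h i - h j) = 0 := by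
    refine Finset.sum_eq_zero fun i _ => ?_
    by_cases hi : i ∈ B
    · simp [hy i hi]
    · rw [hh i hi, mul_zero]
  have hsplit := A.dirichletEnergy_add h (y - h)
  rw [add_sub_cancel, hA.sum_sum_mul_sub_mul_sub, hcross] at hsplit
  linarith [dirichletEnergy_nonneg hA0 (y - h)]

theorem diagonal_rowSum_sub_mulVec_apply [DecidableEq ι] (W : Matrix ι ι ℝ) (h : ι → ℝ) (i : ι) :
    (((diagonal fun i => ∑ j, W i j) - W) *ᵥ h) i = ∑ j, W i j * (h i - h j) := by
  rw [sub_mulVec, Pi.sub_apply, mulVec_diagonal, mulVec, dotProduct, Finset.sum_mul,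
    ← Finset.sum_sub_distrib]
  simp only [mul_sub]

section Symmetrization

variable {α : Type*} {B : Set α} {W A : Matrix α α ℝ}

theorem isSymm_of_eq_symmetrization (hR : ∀ i j, i ∉ B → A i j = W i j)
    (hS : ∀ i ∈ B, ∀ j, j ∉ B → A i j = W j i) (hSS : ∀ i ∈ B, ∀ j ∈ B, A i j = 0)
    (hW : ∀ i j, i ∉ B → j ∉ B → W i j = W j i) :
    A.IsSymm := by
  refine IsSymm.ext fun i j => ?_
  by_cases hi : i ∈ B <;> by_cases hj : j ∈ B
  · rw [hSS i hi j hj, hSS j hj i hi]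
  · rw [hS i hi j hj, hR j i hj]
  · rw [hR i j hi, hS j hj i hi]
  · rw [hR i j hi, hR j i hj, hW i j hi hj]

theorem nonneg_of_eq_symmetrization (hR : ∀ i j, i ∉ B → A i j = W i j)
    (hS : ∀ i ∈ B, ∀ j, j ∉ B → A i j = W j i) (hSS : ∀ i ∈ B, ∀ j ∈ B, A i j = 0)
    (hW : ∀ i j, 0 ≤ W i j) (i j : α) : 0 ≤ A i j := by
  by_cases hi : i ∈ B
  · by_cases hj : j ∈ B
    · rw [hSS i hi j hj]
    · rw [hS i hi j hj]; exact hW j i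
  · rw [hR i j hi]; exact hW i j

end Symmetrization

end Matrix

theorem stmt_11_general {n s : ℕ}
    (W : Matrix (Fin n) (Fin n) ℝ)
    (hWnn : ∀ i j, 0 ≤ W i j)
    (S : Fin s → Finset (Fin n))
    (Sall : Finset (Fin n))
    (hSall : ∀ i, i ∈ Sall ↔ ∃ k, i ∈ S k)
    (hRsym : ∀ i j, i ∉ Sall → j ∉ Sall → W i j = W j i)
    (L : Matrix (Fin n) (Fin n) ℝ)
    (hL : L = Matrix.diagonal (fun i => ∑ j, W i j) - W)
    -- Ŵ : the symmetrized weight matrix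
    (What : Matrix (Fin n) (Fin n) ℝ)
    (hWhatR : ∀ i j, i ∉ Sall → What i j = W i j)
    (hWhatS : ∀ i ∈ Sall, ∀ j, j ∉ Sall → What i j = W j i)
    (hWhatSS : ∀ i ∈ Sall, ∀ j ∈ Sall, What i j = 0)
    -- H : the unique nonneg matrix with H𝟙 = 𝟙, LH = 0 and the boundary values
    (H : Matrix (Fin n) (Fin s) ℝ)
    (hLH : L * H = 0)
    (hHone : ∀ k, ∀ i ∈ S k, H i k = 1)
    (hHzero : ∀ k l, l ≠ k → ∀ i ∈ S l, H i k = 0)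
    (k : Fin s)
    (y : Fin n → ℝ)
    (hy1 : ∀ i ∈ S k, y i = 1)
    (hy0 : ∀ l, l ≠ k → ∀ i ∈ S l, y i = 0) :
    (1 / 2) * ∑ i, ∑ j, What i j * (H i k - H j k) ^ 2 ≤
      (1 / 2) * ∑ i, ∑ j, What i j * (y i - y j) ^ 2 := by
  have hharm : ∀ i ∉ (Sall : Set (Fin n)), ∑ j, What i j * (H i k - H j k) = 0 := by
    intro i hi
    simp only [hWhatR i _ hi, ← diagonal_rowSum_sub_mulVec_apply W (fun j => H j k), ← hL]
    exact congrFun (congrFun hLH i) k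
  have hboundary : ∀ i ∈ (Sall : Set (Fin n)), y i = H i k := by
    intro i hi
    obtain ⟨l, hl⟩ := (hSall i).1 hi
    by_cases hlk : l = k
    · subst hlk
      rw [hy1 i hl, hHone l i hl]
    · rw [hy0 l hlk i hl, hHzero k l hlk i hl]
  exact mul_le_mul_of_nonneg_left
    (dirichletEnergy_le_of_harmonic (isSymm_of_eq_symmetrization hWhatR hWhatS hWhatSS hRsym)
      (nonneg_of_eq_symmetrization hWhatR hWhatS hWhatSS hWnn) hharm hboundary) (by norm_num)

/-- With `W` symmetric on `R × R`, the `k`-th column of `H` minimizes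
the energy dissipation `(1/2)∑_{i,j} Ŵ_{ij}(y_i − y_j)²` among all `y` with `y = 1`
on `S_k` and `y = 0` on `S_{−k}`. -/
theorem stmt_11 {n s : ℕ} (hn : 1 ≤ n) (hs : 2 ≤ s)
    (W : Matrix (Fin n) (Fin n) ℝ)
    (hWnn : ∀ i j, 0 ≤ W i j)
    (hrow : ∀ i, 0 < ∑ j, W i j)
    (S : Fin s → Finset (Fin n))
    (hSne : ∀ k, (S k).Nonempty)
    (hSdisj : ∀ k l, k ≠ l → Disjoint (S k) (S l))
    (Sall : Finset (Fin n))
    (hSall : ∀ i, i ∈ Sall ↔ ∃ k, i ∈ S k)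
    (hRne : ∃ i, i ∉ Sall)
    (hsink : ∀ k, ∀ i ∈ S k, ∀ j, j ∉ S k → W i j = 0)
    (hSirr : ∀ k, ∀ i ∈ S k, ∀ j ∈ S k, i ≠ j →
      Relation.TransGen (fun a b => a ∈ S k ∧ b ∈ S k ∧ 0 < W a b) i j)
    (hreach : ∀ i, i ∉ Sall →
      ∃ j ∈ Sall, Relation.TransGen (fun a b => 0 < W a b) i j)
    (hRsym : ∀ i j, i ∉ Sall → j ∉ Sall → W i j = W j i)
    (L : Matrix (Fin n) (Fin n) ℝ)
    (hL : L = Matrix.diagonal (fun i => ∑ j, W i j) - W)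
    -- Ŵ : the symmetrized weight matrix
    (What : Matrix (Fin n) (Fin n) ℝ)
    (hWhatR : ∀ i j, i ∉ Sall → What i j = W i j)
    (hWhatS : ∀ i ∈ Sall, ∀ j, j ∉ Sall → What i j = W j i)
    (hWhatSS : ∀ i ∈ Sall, ∀ j ∈ Sall, What i j = 0)
    -- H : the unique nonneg matrix with H𝟙 = 𝟙, LH = 0 and the boundary values
    (H : Matrix (Fin n) (Fin s) ℝ)
    (hHnn : ∀ i k, 0 ≤ H i k)
    (hHrow : ∀ i, ∑ k, H i k = 1)
    (hLH : L * H = 0)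
    (hHone : ∀ k, ∀ i ∈ S k, H i k = 1)
    (hHzero : ∀ k l, l ≠ k → ∀ i ∈ S l, H i k = 0)
    (k : Fin s)
    (y : Fin n → ℝ)
    (hy1 : ∀ i ∈ S k, y i = 1)
    (hy0 : ∀ l, l ≠ k → ∀ i ∈ S l, y i = 0) :
    (1 / 2) * ∑ i, ∑ j, What i j * (H i k - H j k) ^ 2 ≤
      (1 / 2) * ∑ i, ∑ j, What i j * (y i - y j) ^ 2 :=
  stmt_11_general W hWnn S Sall hSall hRsym L hL What hWhatR hWhatS hWhatSS H hLH hHone hHzero k y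
    hy1 hy0
end

section
/- Under the sink structure hypotheses with s ≥ 2 and with the restriction of W to R × R symmetric, let h be the k-th column of H. Then for every subset U ⊆ V with S_k ⊆ U and S_{−k} ∩ U = ∅, the flow across the cut equals the flow out of S_k and the flow into S_{−k}: ∑_{i∈V} ∑_{j∈S_k} Ŵ_{ij}(1 − h_i) = ∑_{i∈U} ∑_{j∈V\U} Ŵ_{ij}(h_i − h_j) = ∑_{i∈V} ∑_{j∈S_{−k}} Ŵ_{ij} h_i. -/
open Matrix

/-- With `W` symmetric on `R × R` and `h` the `k`-th column of `H`,
for every cut `U ⊇ S_k` with `U ∩ S_{−k} = ∅`, the flow out of `S_k`, the flow across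
the cut, and the flow into `S_{−k}` coincide. -/
theorem stmt_12 {n s : ℕ} (hn : 1 ≤ n) (hs : 2 ≤ s)
    (W : Matrix (Fin n) (Fin n) ℝ)
    (hWnn : ∀ i j, 0 ≤ W i j)
    (hrow : ∀ i, 0 < ∑ j, W i j)
    (S : Fin s → Finset (Fin n))
    (hSne : ∀ k, (S k).Nonempty)
    (hSdisj : ∀ k l, k ≠ l → Disjoint (S k) (S l))
    (Sall : Finset (Fin n))
    (hSall : ∀ i, i ∈ Sall ↔ ∃ k, i ∈ S k)
    (hRne : ∃ i, i ∉ Sall)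
    (hsink : ∀ k, ∀ i ∈ S k, ∀ j, j ∉ S k → W i j = 0)
    (hSirr : ∀ k, ∀ i ∈ S k, ∀ j ∈ S k, i ≠ j →
      Relation.TransGen (fun a b => a ∈ S k ∧ b ∈ S k ∧ 0 < W a b) i j)
    (hreach : ∀ i, i ∉ Sall →
      ∃ j ∈ Sall, Relation.TransGen (fun a b => 0 < W a b) i j)
    (hRsym : ∀ i j, i ∉ Sall → j ∉ Sall → W i j = W j i)
    (L : Matrix (Fin n) (Fin n) ℝ)
    (hL : L = Matrix.diagonal (fun i => ∑ j, W i j) - W)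
    -- Ŵ : the symmetrized weight matrix
    (What : Matrix (Fin n) (Fin n) ℝ)
    (hWhatR : ∀ i j, i ∉ Sall → What i j = W i j)
    (hWhatS : ∀ i ∈ Sall, ∀ j, j ∉ Sall → What i j = W j i)
    (hWhatSS : ∀ i ∈ Sall, ∀ j ∈ Sall, What i j = 0)
    -- H : the unique nonneg matrix with H𝟙 = 𝟙, LH = 0 and the boundary values
    (H : Matrix (Fin n) (Fin s) ℝ)
    (hHnn : ∀ i k, 0 ≤ H i k)
    (hHrow : ∀ i, ∑ k, H i k = 1)
    (hLH : L * H = 0)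
    (hHone : ∀ k, ∀ i ∈ S k, H i k = 1)
    (hHzero : ∀ k l, l ≠ k → ∀ i ∈ S l, H i k = 0)
    (k : Fin s)
    (U : Finset (Fin n))
    (hUk : S k ⊆ U)
    (hUmk : ∀ i ∈ Sall \ S k, i ∉ U) :
    (∑ i, ∑ j ∈ S k, What i j * (1 - H i k) =
        ∑ i ∈ U, ∑ j ∈ Uᶜ, What i j * (H i k - H j k)) ∧
    (∑ i ∈ U, ∑ j ∈ Uᶜ, What i j * (H i k - H j k) =
        ∑ i, ∑ j ∈ Sall \ S k, What i j * H i k) := by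

  have Wsym : ∀ i j, What i j = What j i := by
    intro i j
    by_cases hi : i ∈ Sall <;> by_cases hj : j ∈ Sall
    · rw [hWhatSS i hi j hj, hWhatSS j hj i hi]
    · rw [hWhatS i hi j hj, hWhatR j i hj]
    · rw [hWhatR i j hi, hWhatS j hj i hi]
    · rw [hWhatR i j hi, hWhatR j i hj, hRsym i j hi hj]
  have divW : ∀ i, ∑ j, W i j * (H i k - H j k) = 0 := by
    intro i
    have h0 : (L * H) i k = 0 := by rw [hLH]; rfl
    rw [Matrix.mul_apply, hL] at h0
    simp only [Matrix.sub_apply, Matrix.diagonal_apply, sub_mul, ite_mul, zero_mul] at h0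
    rw [Finset.sum_sub_distrib, Finset.sum_ite_eq Finset.univ i (fun j => (∑ l, W i l) * H j k)] at h0
    simp only [Finset.mem_univ, if_true, Finset.sum_mul] at h0
    have : ∑ j, W i j * (H i k - H j k)
        = (∑ j, W i j * H i k) - ∑ j, W i j * H j k := by
      rw [← Finset.sum_sub_distrib]; apply Finset.sum_congr rfl; intro j _; ring
    rw [this, ← h0]
  set F : Fin n → Fin n → ℝ := fun i j => What i j * (H i k - H j k) with hF
  have Fanti : ∀ i j, F j i = -F i j := by
    intro i j; simp only [hF]; rw [Wsym j i]; ring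
  have sq : ∀ A : Finset (Fin n), ∑ i ∈ A, ∑ j ∈ A, F i j = 0 := by
    intro A
    have h2 : ∑ i ∈ A, ∑ j ∈ A, F i j = -∑ i ∈ A, ∑ j ∈ A, F i j := by
      calc ∑ i ∈ A, ∑ j ∈ A, F i j = ∑ j ∈ A, ∑ i ∈ A, F i j := Finset.sum_comm
        _ = ∑ j ∈ A, ∑ i ∈ A, -F j i := by
            apply Finset.sum_congr rfl; intro j _; apply Finset.sum_congr rfl; intro i _
            rw [Fanti j i]
        _ = -∑ i ∈ A, ∑ j ∈ A, F i j := by simp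
    linarith
  have divR : ∀ i, i ∉ Sall → ∑ j, F i j = 0 := by
    intro i hi
    have : ∀ j, F i j = W i j * (H i k - H j k) := by
      intro j; simp only [hF]; rw [hWhatR i j hi]
    rw [Finset.sum_congr rfl (fun j _ => this j)]
    exact divW i
  have cutU : ∑ i ∈ U, ∑ j ∈ Uᶜ, F i j = ∑ i ∈ U, ∑ j, F i j := by
    have : ∀ i ∈ U, ∑ j, F i j = ∑ j ∈ U, F i j + ∑ j ∈ Uᶜ, F i j := by
      intro i _; rw [Finset.sum_add_sum_compl]
    rw [Finset.sum_congr rfl this, Finset.sum_add_distrib, sq U, zero_add]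
  have total : ∑ i ∈ U, ∑ j, F i j + ∑ i ∈ Uᶜ, ∑ j, F i j = 0 := by
    rw [Finset.sum_add_sum_compl (s := U) (f := fun i => ∑ j, F i j)]
    exact sq Finset.univ
  have sumU : ∑ i ∈ U, ∑ j, F i j = ∑ i ∈ S k, ∑ j, F i j := by
    refine (Finset.sum_subset hUk ?_).symm
    intro i hiU hiS
    by_cases hi : i ∈ Sall
    · exact absurd hiU (hUmk i (Finset.mem_sdiff.mpr ⟨hi, hiS⟩))
    · exact divR i hi
  have sumUc : ∑ i ∈ Uᶜ, ∑ j, F i j = ∑ i ∈ Sall \ S k, ∑ j, F i j := by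
    refine (Finset.sum_subset ?_ ?_).symm
    · intro i hi
      exact Finset.mem_compl.mpr (hUmk i hi)
    · intro i hiU hiS
      by_cases hi : i ∈ Sall
      · have hik : i ∈ S k := by
          by_contra hx; exact hiS (Finset.mem_sdiff.mpr ⟨hi, hx⟩)
        exact absurd (hUk hik) (Finset.mem_compl.mp hiU)
      · exact divR i hi
  have hinS : ∀ i ∈ Sall \ S k, H i k = 0 := by
    intro i hi
    rcases Finset.mem_sdiff.mp hi with ⟨hiA, hiK⟩
    rcases (hSall i).mp hiA with ⟨l, hl⟩
    have hlk : l ≠ k := fun h => hiK (h ▸ hl)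
    exact hHzero k l hlk i hl
  have e1 : ∑ i ∈ S k, ∑ j, F i j = ∑ i, ∑ j ∈ S k, What i j * (1 - H i k) := by
    rw [Finset.sum_comm]
    apply Finset.sum_congr rfl; intro j _
    apply Finset.sum_congr rfl; intro i hi
    simp only [hF]
    rw [hHone k i hi, Wsym i j]
  have e2 : ∑ i ∈ Sall \ S k, ∑ j, F i j = -∑ i, ∑ j ∈ Sall \ S k, What i j * H i k := by
    rw [Finset.sum_comm, ← Finset.sum_neg_distrib]
    apply Finset.sum_congr rfl; intro j _
    rw [← Finset.sum_neg_distrib]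
    apply Finset.sum_congr rfl; intro i hi
    simp only [hF]
    rw [hinS i hi, Wsym i j]; ring
  constructor
  · rw [cutU, sumU, e1]
  · rw [cutU, sumU]
    have : ∑ i ∈ S k, ∑ j, F i j = -∑ i ∈ Sall \ S k, ∑ j, F i j := by
      rw [← sumU, ← sumUc]; linarith
    rw [this, e2, neg_neg]
end
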